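/- arXiv:2309.00880 — 8 statements merged into one kernel-verified Lean document; each statement's English description precedes it below -/
import Mathlib

section
/- Let q be a prime power and let P(x) = x^{q^n} + a_{n-1}x^{q^{n-1}} + ... + a_1 x^q + a_0 x be a monic q-polynomial of q-degree n in F_q[x] with a_0 ≠ 0. Let E be a splitting field of P over F_q, let W be the set of roots of P in E (an F_q-vector space of dimension n), and let F : W → W be the Frobenius q-power map w ↦ w^q. Then the minimal polynomial of the F_q-linear map F acting on W is m(x) = x^n + a_{n-1}x^{n-1} + ... + a_1 x + a_0, and W is cyclic under F: there exists a root α of P such that α, α^q, α^{q^2}, ..., α^{q^{n-1}} form an F_q-basis of W. -/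
open Polynomial

section QPolyDef

variable {Fq : Type*} [Field Fq]

/-- The `q`-polynomial (linearized polynomial) associated to `g`. -/
noncomputable def qpoly (q : ℕ) (g : Polynomial Fq) : Polynomial Fq :=
  g.sum fun i c => C c * X ^ (q ^ i)

lemma qpoly_add (q : ℕ) (g h : Polynomial Fq) :
    qpoly q (g + h) = qpoly q g + qpoly q h := by
  unfold qpoly
  apply Polynomial.sum_add_index <;> intros <;> simp [add_mul]

lemma qpoly_monomial (q : ℕ) (i : ℕ) (c : Fq) :
    qpoly q (monomial i c) = C c * X ^ (q ^ i) := by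
  unfold qpoly
  apply Polynomial.sum_monomial_index
  simp

lemma qpoly_zero (q : ℕ) : qpoly q (0 : Polynomial Fq) = 0 := by simp [qpoly]

lemma qpoly_sum (q : ℕ) {ι : Type*} (s : Finset ι) (f : ι → Polynomial Fq) :
    qpoly q (∑ i ∈ s, f i) = ∑ i ∈ s, qpoly q (f i) := by
  classical
  induction s using Finset.induction_on with
  | empty => simp [qpoly_zero]
  | insert _ _ h ih => rw [Finset.sum_insert h, qpoly_add, ih, Finset.sum_insert h]

lemma qpoly_mul [Fintype Fq] {q : ℕ} (hq : Fintype.card Fq = q) (g h : Polynomial Fq) :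
    qpoly q (g * h) = (qpoly q g).comp (qpoly q h) := by
  classical
  obtain ⟨p, hchar⟩ := CharP.exists Fq
  obtain ⟨k, hp, hcard⟩ := FiniteField.card Fq p
  haveI : Fact p.Prime := ⟨hp⟩
  have hqpk : q = p ^ (k : ℕ) := by rw [← hq, hcard]
  have frob : ∀ (i : ℕ) (A B : Polynomial Fq),
      (A + B) ^ q ^ i = A ^ q ^ i + B ^ q ^ i := by
    intro i A B
    rw [hqpk, ← pow_mul, add_pow_char_pow]
  induction g using Polynomial.induction_on' with
  | add g1 g2 ih1 ih2 => rw [add_mul, qpoly_add, qpoly_add, add_comp, ih1, ih2]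
  | monomial i c =>
    induction h using Polynomial.induction_on' with
    | add h1 h2 ih1 ih2 =>
      rw [mul_add, qpoly_add, ih1, ih2, qpoly_add]
      simp only [qpoly_monomial, mul_comp, C_comp, pow_comp, X_comp]
      rw [frob, mul_add]
    | monomial j d =>
      rw [monomial_mul_monomial, qpoly_monomial, qpoly_monomial, qpoly_monomial,
        mul_comp, C_comp, pow_comp, X_comp, mul_pow, ← C_pow, ← hq,
        FiniteField.pow_card_pow, ← pow_mul, C_mul, pow_add, Nat.mul_comm]
      ring

end QPolyDef
section QPolyDeg

variable {Fq : Type*} [Field Fq]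

lemma qpoly_coeff_q_pow {q : ℕ} (hq2 : 2 ≤ q) (g : Polynomial Fq) (j : ℕ) :
    (qpoly q g).coeff (q ^ j) = g.coeff j := by
  classical
  rw [qpoly, Polynomial.sum_def, finset_sum_coeff]
  rw [Finset.sum_eq_single j]
  · simp [coeff_C_mul, coeff_X_pow]
  · intro b _ hbj
    rw [coeff_C_mul, coeff_X_pow, if_neg, mul_zero]
    exact fun hc => hbj (Nat.pow_right_injective hq2 hc.symm)
  · intro hj
    rw [Polynomial.notMem_support_iff.mp hj]
    simp

lemma natDegree_qpoly_le {q : ℕ} (hq1 : 1 ≤ q) (g : Polynomial Fq) :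
    (qpoly q g).natDegree ≤ q ^ g.natDegree := by
  classical
  rw [qpoly, Polynomial.sum_def]
  refine (natDegree_sum_le _ _).trans ?_
  rw [Finset.fold_max_le]
  refine ⟨Nat.zero_le _, fun b hb => ?_⟩
  refine (natDegree_C_mul_le _ _).trans ?_
  rw [natDegree_X_pow]
  exact Nat.pow_le_pow_right hq1 (Polynomial.le_natDegree_of_mem_supp b hb)

lemma natDegree_qpoly {q : ℕ} (hq2 : 2 ≤ q) {g : Polynomial Fq} (hg : g.Monic) :
    (qpoly q g).natDegree = q ^ g.natDegree := by
  refine le_antisymm (natDegree_qpoly_le (by omega) g) ?_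
  apply le_natDegree_of_ne_zero
  rw [qpoly_coeff_q_pow hq2, hg.coeff_natDegree]
  exact one_ne_zero

lemma monic_qpoly {q : ℕ} (hq2 : 2 ≤ q) {g : Polynomial Fq} (hg : g.Monic) :
    (qpoly q g).Monic := by
  rw [Polynomial.Monic, Polynomial.leadingCoeff, natDegree_qpoly hq2 hg,
    qpoly_coeff_q_pow hq2]
  exact hg

lemma X_dvd_qpoly {q : ℕ} (hq1 : 1 ≤ q) (g : Polynomial Fq) :
    X ∣ qpoly q g := by
  classical
  rw [X_dvd_iff, qpoly, Polynomial.sum_def, finset_sum_coeff]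
  apply Finset.sum_eq_zero
  intro b _
  rw [coeff_C_mul, coeff_X_pow, if_neg, mul_zero]
  have : 0 < q ^ b := Nat.pow_pos hq1
  omega

lemma derivative_qpoly {q : ℕ} (hq0 : (q : Fq) = 0) (g : Polynomial Fq) :
    derivative (qpoly q g) = C (g.coeff 0) := by
  classical
  rw [qpoly, Polynomial.sum_def, derivative_sum]
  rw [Finset.sum_eq_single 0]
  · simp
  · intro b _ hb
    rw [derivative_C_mul, derivative_X_pow]
    have : ((q ^ b : ℕ) : Fq) = 0 := by
      rw [Nat.cast_pow, hq0, zero_pow hb]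
    rw [this, C_0, zero_mul, mul_zero]
  · intro h0
    rw [Polynomial.notMem_support_iff.mp h0]
    simp

end QPolyDeg
section Main

variable {Fq : Type*} [Field Fq] [Fintype Fq] {q : ℕ}
  {E : Type*} [Field E] [Algebra Fq E]
  {W : Submodule Fq E} {F : Module.End Fq W}

lemma coe_pow_apply (hF : ∀ w : W, (F w : E) = (w : E) ^ q) (i : ℕ) (w : W) :
    (((F ^ i) w : W) : E) = (w : E) ^ q ^ i := by
  induction i with
  | zero => simp
  | succ i ih =>
    rw [pow_succ', Module.End.mul_apply, hF ((F ^ i) w), ih, ← pow_mul, ← pow_succ]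

lemma aeval_coe (hq : Fintype.card Fq = q) (hF : ∀ w : W, (F w : E) = (w : E) ^ q)
    (g : Polynomial Fq) (w : W) :
    (((Polynomial.aeval F g) w : W) : E) = Polynomial.aeval (w : E) (qpoly q g) := by
  induction g using Polynomial.induction_on' with
  | add g1 g2 ih1 ih2 =>
    rw [map_add, LinearMap.add_apply, Submodule.coe_add, ih1, ih2, qpoly_add, map_add]
  | monomial i c =>
    rw [aeval_monomial, qpoly_monomial, Module.End.mul_apply,
      Module.algebraMap_end_apply, map_mul, aeval_C, map_pow, aeval_X,
      Submodule.coe_smul, Algebra.smul_def, coe_pow_apply hF]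

lemma card_ker (hq : Fintype.card Fq = q) (hF : ∀ w : W, (F w : E) = (w : E) ^ q)
    {P : Polynomial Fq} (hW : (W : Set E) = P.rootSet E)
    (hsep : P.Separable) (hP0 : P ≠ 0)
    (hsplit : Polynomial.Splits (P.map (algebraMap Fq E)))
    {m : Polynomial Fq} (hmqP : qpoly q m = P)
    {h : Polynomial Fq} (hmon : h.Monic) (hdvd : h ∣ m) :
    Nat.card (LinearMap.ker (Polynomial.aeval F h)) = q ^ h.natDegree := by
  classical
  have hq2 : 2 ≤ q := hq ▸ Fintype.one_lt_card
  obtain ⟨c, hc⟩ := hdvd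
  obtain ⟨t, ht⟩ := X_dvd_qpoly (by omega : 1 ≤ q) c
  have hPfac : P = qpoly q h * t.comp (qpoly q h) := by
    rw [← hmqP, hc, mul_comm h c, qpoly_mul hq, ht, mul_comp, X_comp]
  have hHdvd : qpoly q h ∣ P := ⟨_, hPfac⟩
  have hHne : qpoly q h ≠ 0 := (monic_qpoly hq2 hmon).ne_zero
  have hHsep : (qpoly q h).Separable := hsep.of_dvd hHdvd
  have hHsplit := Polynomial.Splits.of_dvd hsplit (Polynomial.map_ne_zero hP0) (Polynomial.map_dvd _ hHdvd)
  have key : ∀ w : W, (Polynomial.aeval F h) w = 0 ↔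
      (w : E) ∈ (qpoly q h).rootSet E := by
    intro w
    rw [Polynomial.mem_rootSet]
    constructor
    · intro hw
      refine ⟨hHne, ?_⟩
      rw [← aeval_coe hq hF, hw, ZeroMemClass.coe_zero]
    · intro hw
      have := aeval_coe hq hF h w
      rw [hw.2] at this
      exact Subtype.ext this
  have inW : ∀ x : E, x ∈ (qpoly q h).rootSet E → x ∈ W := by
    intro x hx
    have hx0 : Polynomial.aeval x P = 0 := by
      rw [hPfac, map_mul, (Polynomial.mem_rootSet.mp hx).2, zero_mul]
    have : x ∈ P.rootSet E := Polynomial.mem_rootSet.mpr ⟨hP0, hx0⟩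
    rw [← SetLike.mem_coe, hW]
    exact this
  let e : (LinearMap.ker (Polynomial.aeval F h)) ≃ ((qpoly q h).rootSet E) :=
    { toFun := fun x => ⟨((x : W) : E), (key x).mp x.2⟩
      invFun := fun y => ⟨⟨(y : E), inW _ y.2⟩, (key ⟨(y : E), inW _ y.2⟩).mpr y.2⟩
      left_inv := fun x => by ext; rfl
      right_inv := fun y => by ext; rfl }
  rw [Nat.card_congr e, Nat.card_eq_fintype_card,
    Polynomial.card_rootSet_eq_natDegree hHsep hHsplit, natDegree_qpoly hq2 hmon]

end Main
section Main2

variable {Fq : Type*} [Field Fq] [Fintype Fq] {q : ℕ}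
  {E : Type*} [Field E] [Algebra Fq E]
  {W : Submodule Fq E} {F : Module.End Fq W}

lemma exists_order (hq : Fintype.card Fq = q) (hF : ∀ w : W, (F w : E) = (w : E) ^ q)
    {P : Polynomial Fq} (hW : (W : Set E) = P.rootSet E)
    (hsep : P.Separable) (hP0 : P ≠ 0)
    (hsplit : Polynomial.Splits (P.map (algebraMap Fq E)))
    {m : Polynomial Fq} (hmqP : qpoly q m = P) :
    ∀ (d : ℕ) (h : Polynomial Fq), h.natDegree ≤ d → h.Monic → h ∣ m →
      ∃ v : W, (Polynomial.aeval F h) v = 0 ∧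
        ∀ g : Polynomial Fq, (Polynomial.aeval F g) v = 0 → h ∣ g := by
  classical
  have hq2 : 2 ≤ q := hq ▸ Fintype.one_lt_card
  intro d
  induction d with
  | zero =>
    intro h hd hmon _
    have h1 : h = 1 := hmon.natDegree_eq_zero.mp (Nat.le_zero.mp hd)
    exact ⟨0, by simp [h1], fun g _ => h1 ▸ one_dvd g⟩
  | succ d ih =>
    intro h hd hmon hdvd
    by_cases h1 : h.natDegree = 0
    · have h1' : h = 1 := hmon.natDegree_eq_zero.mp h1
      exact ⟨0, by simp [h1'], fun g _ => h1' ▸ one_dvd g⟩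
    have hpos : 0 < h.natDegree := Nat.pos_of_ne_zero h1
    have hnu : ¬ IsUnit h := by
      intro hu
      rw [hmon.eq_one_of_isUnit hu, natDegree_one] at h1
      exact h1 rfl
    obtain ⟨p₀, hp₀irr, hp₀dvd⟩ := WfDvdMonoid.exists_irreducible_factor hnu hmon.ne_zero
    have hp₀0 : p₀ ≠ 0 := hp₀irr.ne_zero
    set p := normalize p₀ with hpdef
    have hpmon : p.Monic := Polynomial.monic_normalize hp₀0
    have hpirr : Irreducible p := (associated_normalize p₀).irreducible hp₀irr
    have hpdvd : p ∣ h := ((associated_normalize p₀).symm.dvd).trans hp₀dvd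
    have hpdeg : 0 < p.natDegree := hpirr.natDegree_pos
    have hprime : Prime p := hpirr.prime
    set e := Nat.findGreatest (fun k => p ^ k ∣ h) h.natDegree with hedef
    have he : p ^ e ∣ h :=
      Nat.findGreatest_spec (P := fun k => p ^ k ∣ h) (m := 1) hpos (by simpa using hpdvd)
    have he1 : 1 ≤ e := Nat.le_findGreatest hpos (by simpa using hpdvd)
    have hnotdvd : ¬ p ^ (e + 1) ∣ h := by
      by_cases hle : e + 1 ≤ h.natDegree
      · exact Nat.findGreatest_is_greatest (Nat.lt_succ_self e) hle
      · intro hdd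
        have h2 := Polynomial.natDegree_le_of_dvd hdd hmon.ne_zero
        rw [natDegree_pow] at h2
        have h3 : e + 1 ≤ (e + 1) * p.natDegree := Nat.le_mul_of_pos_right _ hpdeg
        omega
    obtain ⟨h', hh'⟩ := he
    have hh'mon : h'.Monic := (hpmon.pow e).of_mul_monic_left (hh' ▸ hmon)
    have hpnd : ¬ p ∣ h' := by
      intro hdvd'
      exact hnotdvd (by rw [hh', pow_succ]; exact mul_dvd_mul_left _ hdvd')
    have hcop : IsCoprime (p ^ e) h' := ((hpirr.coprime_iff_not_dvd).mpr hpnd).pow_left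
    have hpe_dvd_m : p ^ e ∣ m := (Dvd.intro _ hh'.symm).trans hdvd
    have hpe1_dvd_m : p ^ (e - 1) ∣ m := (pow_dvd_pow p (Nat.sub_le e 1)).trans hpe_dvd_m
    have hc1 := card_ker hq hF hW hsep hP0 hsplit hmqP (hpmon.pow e) hpe_dvd_m
    have hc0 := card_ker hq hF hW hsep hP0 hsplit hmqP (hpmon.pow (e - 1)) hpe1_dvd_m
    have hdeglt : (p ^ (e - 1)).natDegree < (p ^ e).natDegree := by
      rw [natDegree_pow, natDegree_pow]
      have : e - 1 < e := by omega
      exact Nat.mul_lt_mul_of_lt_of_le this le_rfl hpdeg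
    have hker_le : LinearMap.ker (Polynomial.aeval F (p ^ (e - 1))) ≤
        LinearMap.ker (Polynomial.aeval F (p ^ e)) := by
      intro x hx
      rw [LinearMap.mem_ker] at hx ⊢
      have : p ^ e = p * p ^ (e - 1) := by
        rw [← pow_succ']
        congr 1
        omega
      rw [this, map_mul, Module.End.mul_apply, hx, map_zero]
    have hv₁ : ∃ v₁, v₁ ∈ LinearMap.ker (Polynomial.aeval F (p ^ e)) ∧
        v₁ ∉ LinearMap.ker (Polynomial.aeval F (p ^ (e - 1))) := by
      by_contra hcon
      push_neg at hcon
      have heq : LinearMap.ker (Polynomial.aeval F (p ^ e)) =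
          LinearMap.ker (Polynomial.aeval F (p ^ (e - 1))) :=
        le_antisymm hcon hker_le
      rw [heq, hc0] at hc1
      exact absurd (Nat.pow_right_injective hq2 hc1) (Nat.ne_of_lt hdeglt)
    obtain ⟨v₁, hv₁K, hv₁N⟩ := hv₁
    rw [LinearMap.mem_ker] at hv₁K
    have hOrd1 : ∀ g : Polynomial Fq, (Polynomial.aeval F g) v₁ = 0 → p ^ e ∣ g := by
      intro g hg
      set r := EuclideanDomain.gcd g (p ^ e) with hr
      have hrv : (Polynomial.aeval F r) v₁ = 0 := by
        rw [hr, EuclideanDomain.gcd_eq_gcd_ab, map_add, LinearMap.add_apply,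
          mul_comm g _, mul_comm (p ^ e) _, map_mul, map_mul, Module.End.mul_apply,
          Module.End.mul_apply, hg, hv₁K, map_zero, map_zero, add_zero]
      have hrd : r ∣ p ^ e := EuclideanDomain.gcd_dvd_right g (p ^ e)
      obtain ⟨j, hj, hassoc⟩ := (dvd_prime_pow hprime e).mp hrd
      rcases Nat.lt_or_ge j e with hjlt | hjge
      · exfalso
        apply hv₁N
        rw [LinearMap.mem_ker]
        have hpj : (Polynomial.aeval F (p ^ j)) v₁ = 0 := by
          obtain ⟨u, hu⟩ := hassoc
          rw [← hu, mul_comm, map_mul, Module.End.mul_apply, hrv, map_zero]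
        obtain ⟨t, ht⟩ := pow_dvd_pow p (show j ≤ e - 1 by omega)
        rw [ht, mul_comm, map_mul, Module.End.mul_apply, hpj, map_zero]
      · have hje : j = e := le_antisymm hj hjge
        exact (hje ▸ hassoc.symm.dvd).trans (EuclideanDomain.gcd_dvd_left g (p ^ e))
    have hh'dvd_m : h' ∣ m := (Dvd.intro_left _ hh'.symm).trans hdvd
    have hh'deg : h'.natDegree ≤ d := by
      have hdegs : h.natDegree = e * p.natDegree + h'.natDegree := by
        rw [hh', natDegree_mul (pow_ne_zero _ hpmon.ne_zero) hh'mon.ne_zero, natDegree_pow]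
      have h4 : 1 ≤ e * p.natDegree := Nat.one_le_iff_ne_zero.mpr (by positivity)
      omega
    obtain ⟨v', hv'0, hOrd'⟩ := ih h' hh'deg hh'mon hh'dvd_m
    refine ⟨v₁ + v', ?_, ?_⟩
    · have A : (Polynomial.aeval F (p ^ e * h')) v₁ = 0 := by
        rw [mul_comm, map_mul, Module.End.mul_apply, hv₁K, map_zero]
      have B : (Polynomial.aeval F (p ^ e * h')) v' = 0 := by
        rw [map_mul, Module.End.mul_apply, hv'0, map_zero]
      rw [hh', map_add, A, B, add_zero]
    · intro g hg
      have e1 : (Polynomial.aeval F (g * h')) v₁ = 0 := by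
        have z1 : (Polynomial.aeval F (g * h')) (v₁ + v') = 0 := by
          rw [mul_comm, map_mul, Module.End.mul_apply, hg, map_zero]
        have z2 : (Polynomial.aeval F (g * h')) v' = 0 := by
          rw [map_mul, Module.End.mul_apply, hv'0, map_zero]
        have z3 := map_add (Polynomial.aeval F (g * h')) v₁ v'
        rw [z1, z2, add_zero] at z3
        exact z3.symm
      have e2 : (Polynomial.aeval F (g * p ^ e)) v' = 0 := by
        have z1 : (Polynomial.aeval F (g * p ^ e)) (v₁ + v') = 0 := by
          rw [mul_comm, map_mul, Module.End.mul_apply, hg, map_zero]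
        have z2 : (Polynomial.aeval F (g * p ^ e)) v₁ = 0 := by
          rw [map_mul, Module.End.mul_apply, hv₁K, map_zero]
        have z3 := map_add (Polynomial.aeval F (g * p ^ e)) v₁ v'
        rw [z1, z2, zero_add] at z3
        exact z3.symm
      have d1 : p ^ e ∣ g := hcop.dvd_of_dvd_mul_right (hOrd1 _ e1)
      have d2 : h' ∣ g := hcop.symm.dvd_of_dvd_mul_right (hOrd' _ e2)
      rw [hh']
      exact hcop.mul_dvd d1 d2

end Main2
/-- Let `P = X^{q^n} + ∑_{i<n} a_i X^{q^i}` be a monic `q`-polynomial of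
`q`-degree `n` over `F_q` with `a_0 ≠ 0`, let `E` be a splitting field of `P` over `F_q`,
let `W` be the `F_q`-space of roots of `P` in `E`, and let `F : W → W` be the Frobenius
`q`-power map.  Then the minimal polynomial of the `F_q`-linear map `F` is
`X^n + ∑_{i<n} a_i X^i`, and `W` is cyclic under `F`: there is a root `α` such that
`α, F α, …, F^{n-1} α` form an `F_q`-basis of `W`. -/
theorem stmt_1 (Fq : Type*) [Field Fq] [Fintype Fq] (q : ℕ) (hq : Fintype.card Fq = q)
    (n : ℕ) (hn : 0 < n) (a : ℕ → Fq) (ha0 : a 0 ≠ 0)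
    (P : Polynomial Fq)
    (hP : P = X ^ (q ^ n) + ∑ i ∈ Finset.range n, C (a i) * X ^ (q ^ i))
    (E : Type*) [Field E] [Algebra Fq E]
    (hE : Polynomial.IsSplittingField Fq E P)
    (W : Submodule Fq E) (hW : (W : Set E) = P.rootSet E)
    (F : Module.End Fq W) (hF : ∀ w : W, (F w : E) = (w : E) ^ q) :
    minpoly Fq F = X ^ n + ∑ i ∈ Finset.range n, C (a i) * X ^ i ∧
    ∃ (α : W) (b : Module.Basis (Fin n) Fq W), ∀ i : Fin n, b i = (F ^ (i : ℕ)) α := by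
  classical
  set m : Polynomial Fq := X ^ n + ∑ i ∈ Finset.range n, C (a i) * X ^ i with hm
  have hq2 : 2 ≤ q := hq ▸ Fintype.one_lt_card
  have hq0 : (q : Fq) = 0 := hq ▸ FiniteField.cast_card_eq_zero Fq
  -- degree of the sum part
  have hslt : (∑ i ∈ Finset.range n, C (a i) * X ^ i).degree < (X ^ n : Polynomial Fq).degree := by
    rw [degree_X_pow]
    refine lt_of_le_of_lt (Polynomial.degree_sum_le _ _) ?_
    rw [Finset.sup_lt_iff (by exact_mod_cast WithBot.bot_lt_coe n)]
    intro i hi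
    refine lt_of_le_of_lt (Polynomial.degree_C_mul_X_pow_le _ _) ?_
    exact_mod_cast WithBot.coe_lt_coe.mpr (Finset.mem_range.mp hi)
  have hmmon : m.Monic := (monic_X_pow n).add_of_left hslt
  have hmdeg : m.natDegree = n := by
    have : m.degree = (X ^ n : Polynomial Fq).degree :=
      Polynomial.degree_add_eq_left_of_degree_lt hslt
    rw [degree_X_pow] at this
    exact Polynomial.natDegree_eq_of_degree_eq_some this
  have hm0 : m ≠ 0 := hmmon.ne_zero
  have hmqP : qpoly q m = P := by
    rw [hm, hP, qpoly_add, qpoly_sum]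
    congr 1
    · rw [X_pow_eq_monomial, qpoly_monomial, C_1, one_mul]
    · refine Finset.sum_congr rfl fun i _ => ?_
      rw [C_mul_X_pow_eq_monomial, qpoly_monomial, C_mul_X_pow_eq_monomial]
  have hP0 : P ≠ 0 := by
    rw [← hmqP]
    exact (monic_qpoly hq2 hmmon).ne_zero
  have hm_coeff0 : m.coeff 0 = a 0 := by
    rw [hm, Polynomial.coeff_add, Polynomial.coeff_X_pow, if_neg (by omega),
      Polynomial.finset_sum_coeff, Finset.sum_eq_single 0]
    · simp
    · intro b _ hb
      rw [Polynomial.coeff_C_mul, Polynomial.coeff_X_pow, if_neg (fun hc => hb hc.symm),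
        mul_zero]
    · intro h0
      exact absurd (Finset.mem_range.mpr hn) h0
  have hsep : P.Separable := by
    rw [Polynomial.separable_def, ← hmqP, derivative_qpoly hq0, hm_coeff0]
    exact ⟨0, C (a 0)⁻¹, by rw [zero_mul, zero_add, ← C_mul, inv_mul_cancel₀ ha0, C_1]⟩
  have hsplit : Polynomial.Splits (P.map (algebraMap Fq E)) := hE.splits'
  -- the cyclic vector
  obtain ⟨α, hα0, hαOrd⟩ := exists_order hq hF hW hsep hP0 hsplit hmqP
    m.natDegree m le_rfl hmmon dvd_rfl
  -- aeval F m = 0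
  have haevm : Polynomial.aeval F m = 0 := by
    ext w
    show (((Polynomial.aeval F m) w : W) : E) = ((0 : W) : E)
    rw [aeval_coe hq hF, hmqP, ZeroMemClass.coe_zero]
    have hw : (w : E) ∈ P.rootSet E := by
      rw [← hW]
      exact w.2
    exact (Polynomial.mem_rootSet.mp hw).2
  -- cardinality of W
  have hWfin : Finite W := by
    have h1 : ((W : Set E)).Finite := by
      rw [hW]
      exact P.rootSet_finite E
    exact h1.to_subtype
  have hcardW : Nat.card W = q ^ n := by
    have hker := card_ker hq hF hW hsep hP0 hsplit hmqP hmmon (dvd_refl m)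
    rw [hmdeg] at hker
    rw [← hker]
    have : LinearMap.ker (Polynomial.aeval F m) = ⊤ := by
      rw [haevm]
      exact LinearMap.ker_zero
    rw [this]
    exact (Nat.card_congr Submodule.topEquiv.toEquiv).symm
  haveI : Fintype W := Fintype.ofFinite _
  have hfinrank : Module.finrank Fq W = n := by
    have h1 : Fintype.card W = Fintype.card Fq ^ Module.finrank Fq W := Module.card_eq_pow_finrank
    rw [hq, ← Nat.card_eq_fintype_card, hcardW] at h1
    exact (Nat.pow_right_injective hq2 h1.symm)
  -- linear independence
  have hli : LinearIndependent Fq (fun i : Fin n => (F ^ (i : ℕ)) α) := by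
    rw [Fintype.linearIndependent_iff]
    intro c hc
    set g : Polynomial Fq := ∑ i : Fin n, C (c i) * X ^ (i : ℕ) with hg
    have hgα : (Polynomial.aeval F g) α = 0 := by
      rw [hg, map_sum, LinearMap.sum_apply, ← hc]
      refine Finset.sum_congr rfl fun i _ => ?_
      rw [map_mul, aeval_C, map_pow, aeval_X, Module.End.mul_apply,
        Module.algebraMap_end_apply]
    have hdvd := hαOrd g hgα
    have hgz : g = 0 := by
      by_contra hgz
      have hle := Polynomial.natDegree_le_of_dvd hdvd hgz
      have hlt : g.natDegree < n := by
        have h5 : g.natDegree ≤ n - 1 := by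
          rw [hg]
          refine (natDegree_sum_le _ _).trans ?_
          rw [Finset.fold_max_le]
          refine ⟨Nat.zero_le _, fun b _ => ?_⟩
          refine (natDegree_C_mul_le _ _).trans ?_
          rw [natDegree_X_pow]
          omega
        omega
      rw [hmdeg] at hle
      omega
    intro i
    have hcoeff : g.coeff (i : ℕ) = c i := by
      rw [hg, Polynomial.finset_sum_coeff, Finset.sum_eq_single i]
      · rw [Polynomial.coeff_C_mul, Polynomial.coeff_X_pow, if_pos rfl, mul_one]
      · intro b _ hb
        rw [Polynomial.coeff_C_mul, Polynomial.coeff_X_pow, if_neg, mul_zero]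
        exact fun hc' => hb (Fin.ext hc'.symm)
      · intro hi
        exact absurd (Finset.mem_univ i) hi
    rw [hgz, Polynomial.coeff_zero] at hcoeff
    exact hcoeff.symm
  haveI : Nonempty (Fin n) := ⟨⟨0, hn⟩⟩
  have hcardfin : Fintype.card (Fin n) = Module.finrank Fq W := by
    rw [Fintype.card_fin, hfinrank]
  refine ⟨?_, α, basisOfLinearIndependentOfCardEqFinrank hli hcardfin, fun i => ?_⟩
  · -- minpoly
    have hint : IsIntegral Fq F := ⟨m, hmmon, by rwa [← Polynomial.aeval_def]⟩
    have d1 : minpoly Fq F ∣ m := minpoly.dvd Fq F haevm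
    have d2 : m ∣ minpoly Fq F := hαOrd _ (by rw [minpoly.aeval Fq F, LinearMap.zero_apply])
    exact Polynomial.eq_of_monic_of_associated (minpoly.monic hint) hmmon
      (associated_of_dvd_dvd d1 d2)
  · rw [coe_basisOfLinearIndependentOfCardEqFinrank]
end

section
/- Let K be a field and let f and g be relatively prime polynomials in K[x], not both constant. Then the polynomial f(x) + t·g(x), regarded as a polynomial in x with coefficients in the rational function field K(t), is irreducible over K(t). -/
/-!
Swapping the two variables of `K[t][x]` turns `f(x) + t g(x)` into `g(t) x + f(t)`, which is
linear in `x` with relatively prime coefficients, hence irreducible in `K[t][x]`. Being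
irreducible and nonconstant in `x`, `f(x) + t g(x)` is primitive over `K[t]`, so by Gauss's lemma
it stays irreducible over the fraction field `K(t)`.
-/

open Polynomial
open scoped Polynomial.Bivariate

namespace Polynomial

variable {R : Type*} [CommRing R]

theorem Bivariate.swap_C_mul_Y_add_C (f g : R[X]) :
    swap (C g * Y + C f) = f.map C + C X * g.map C := by
  rw [map_add, map_mul, swap_C, swap_C, swap_Y, add_comm, mul_comm]

theorem irreducible_map_C_add_C_X_mul_map_C [IsDomain R] {f g : R[X]} (hg : g ≠ 0)
    (hfg : IsRelPrime f g) : Irreducible (f.map C + C X * g.map C : R[X][Y]) := by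
  rw [← Bivariate.swap_C_mul_Y_add_C, MulEquiv.irreducible_iff]
  exact irreducible_C_mul_X_add_C hg hfg.symm

theorem coeff_map_C_add_C_X_mul_map_C (f g : R[X]) (n : ℕ) :
    (f.map C + C X * g.map C : R[X][Y]).coeff n = C (f.coeff n) + C (g.coeff n) * X := by
  rw [coeff_add, coeff_map, coeff_C_mul, coeff_map, mul_comm]

theorem natDegree_map_C_add_C_X_mul_map_C_le_iff {f g : R[X]} {d : ℕ} :
    (f.map C + C X * g.map C : R[X][Y]).natDegree ≤ d ↔ f.natDegree ≤ d ∧ g.natDegree ≤ d := by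
  simp only [natDegree_le_iff_coeff_eq_zero, coeff_map_C_add_C_X_mul_map_C, ← forall_and]
  refine forall₂_congr fun n _ => ⟨fun h => ?_, fun ⟨hf, hg⟩ => by simp [hf, hg]⟩
  exact ⟨by simpa using congrArg (coeff · 0) h, by simpa using congrArg (coeff · 1) h⟩

theorem map_algebraMap_ratFunc_map_C_add_C_X_mul_map_C {K : Type*} [Field K] (f g : K[X]) :
    (f.map C + C X * g.map C : K[X][Y]).map (algebraMap K[X] (RatFunc K)) =
      f.map (algebraMap K (RatFunc K)) + C RatFunc.X * g.map (algebraMap K (RatFunc K)) := by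
  rw [Polynomial.map_add, Polynomial.map_mul, map_C, map_map, map_map, RatFunc.algebraMap_X,
    RatFunc.algebraMap_comp_C, ← RatFunc.algebraMap_eq_C]

end Polynomial

/-- Let `K` be a field and let `f` and `g` be relatively prime
polynomials in `K[x]`, not both constant.  Then `f(x) + t·g(x)` is irreducible as a
polynomial in `x` over the rational function field `K(t)`. -/
theorem stmt_3 (K : Type*) [Field K] (f g : Polynomial K)
    (hcop : IsCoprime f g) (hnc : 0 < f.natDegree ∨ 0 < g.natDegree) :
    Irreducible (f.map (algebraMap K (RatFunc K)) +
      Polynomial.C RatFunc.X * g.map (algebraMap K (RatFunc K))) := by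
  have hg : g ≠ 0 := by
    rintro rfl
    have := natDegree_eq_zero_of_isUnit (isCoprime_zero_right.mp hcop)
    rw [natDegree_zero] at hnc
    omega
  have hirr := irreducible_map_C_add_C_X_mul_map_C hg hcop.isRelPrime
  have hdeg : (f.map C + C X * g.map C : K[X][Y]).natDegree ≠ 0 := fun h => by
    have := natDegree_map_C_add_C_X_mul_map_C_le_iff.mp h.le
    omega
  rw [← map_algebraMap_ratFunc_map_C_add_C_X_mul_map_C,
    ← (hirr.isPrimitive hdeg).irreducible_iff_irreducible_map_fraction_map]
  exact hirr
end

section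
/- Let q be a power of 2 and let f be a monic polynomial in F_q[x] of degree m ≥ 1. Define h(x) = x^m f(x + x^{-1}), a monic polynomial of degree 2m in F_q[x]. Then: (i) 1 is a root of h if and only if f(0) = 0; (ii) if f(0) = 0, then 1 is a root of h of multiplicity exactly two if and only if 0 is a simple root of f (i.e. x divides f but x^2 does not); (iii) every root of h in an algebraic closure of F_q different from 1 is a simple root if and only if every root of f different from 0 is a simple root. -/
open Polynomial

section Helpers
open Finset

noncomputable def myPhi {K : Type*} [Field K] (n : ℕ) (g : K[X]) : K[X] :=
  ∑ i ∈ Finset.range (n + 1), C (g.coeff i) * X ^ (n - i) * (X ^ 2 + 1) ^ i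

variable {K : Type*} [Field K]

lemma myPhi_eval_ne_zero {n : ℕ} {g : K[X]} (hg : g.natDegree ≤ n) {α : K} (hα : α ≠ 0) :
    (myPhi n g).eval α = α ^ n * g.eval (α + α⁻¹) := by
  rw [myPhi, eval_finset_sum, eval_eq_sum_range' (lt_of_le_of_lt hg (Nat.lt_succ_self n)),
    Finset.mul_sum]
  refine Finset.sum_congr rfl fun i hi => ?_
  have hin : i ≤ n := Nat.lt_succ_iff.mp (Finset.mem_range.mp hi)
  have key : α ^ 2 + 1 = α * (α + α⁻¹) := by field_simp
  simp only [eval_mul, eval_pow, eval_C, eval_X, eval_add, eval_one]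
  rw [key, mul_pow]
  rw [show g.coeff i * α ^ (n - i) * (α ^ i * (α + α⁻¹) ^ i)
      = (α ^ (n - i) * α ^ i) * (g.coeff i * (α + α⁻¹) ^ i) by ring,
    ← pow_add, Nat.sub_add_cancel hin]

lemma myPhi_eval_zero {n : ℕ} (g : K[X]) : (myPhi n g).eval 0 = g.coeff n := by
  rw [myPhi, eval_finset_sum]
  rw [Finset.sum_eq_single n]
  · simp
  · intro i hi hne
    rw [eval_mul, eval_mul, eval_pow, eval_X, zero_pow, mul_zero, zero_mul]
    have : 0 < n - i := Nat.sub_pos_of_lt (lt_of_le_of_ne (Nat.lt_succ_iff.mp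
      (Finset.mem_range.mp hi)) hne)
    exact this.ne'
  · intro hn; exact absurd (Finset.self_mem_range_succ n) hn

lemma myPhi_ne_zero {m : ℕ} {F : K[X]} (hF : F.Monic) (hFdeg : F.natDegree = m) :
    myPhi m F ≠ 0 := by
  intro h0
  have h1 := myPhi_eval_zero (n := m) F
  rw [h0, eval_zero, ← hFdeg, hF.coeff_natDegree] at h1
  exact one_ne_zero h1.symm

lemma myPhi_step [Infinite K] {n : ℕ} {g : K[X]} (hg : g.natDegree ≤ n) (β : K) :
    myPhi (n + 1) ((X - C β) * g) = (X ^ 2 - C β * X + 1) * myPhi n g := by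
  have hdeg : ((X - C β) * g).natDegree ≤ n + 1 := by
    refine le_trans natDegree_mul_le ?_
    rw [natDegree_X_sub_C]
    omega
  rw [← sub_eq_zero]
  apply Polynomial.eq_zero_of_infinite_isRoot
  apply Set.Infinite.mono (s := {x : K | x ≠ 0})
  · intro α (hα : α ≠ 0)
    simp only [Set.mem_setOf_eq, IsRoot.def, eval_sub, eval_mul, eval_add, eval_pow, eval_X,
      eval_C, eval_one]
    rw [myPhi_eval_ne_zero hdeg hα, myPhi_eval_ne_zero hg hα, eval_mul, eval_sub, eval_X, eval_C]
    have : α ^ (n + 1) * (α + α⁻¹ - β) = α ^ n * (α ^ 2 - β * α + 1) := by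
      field_simp
      ring
    rw [pow_succ]
    calc α ^ n * α * ((α + α⁻¹ - β) * eval (α + α⁻¹) g)
          - (α ^ 2 - β * α + 1) * (α ^ n * eval (α + α⁻¹) g)
        = (α ^ (n+1) * (α + α⁻¹ - β) - α ^ n * (α ^ 2 - β * α + 1)) * eval (α + α⁻¹) g := by
          rw [pow_succ]; ring
      _ = 0 := by rw [this]; ring
  · have : ({0}ᶜ : Set K).Infinite := Set.Finite.infinite_compl (Set.finite_singleton 0)
    exact this

lemma myPhi_pow_mul [Infinite K] {n : ℕ} (k : ℕ) {g : K[X]} (hg : g.natDegree ≤ n) (β : K) :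
    myPhi (n + k) ((X - C β) ^ k * g) = (X ^ 2 - C β * X + 1) ^ k * myPhi n g := by
  induction k with
  | zero => simp
  | succ k ih =>
      have hdeg : ((X - C β) ^ k * g).natDegree ≤ n + k := by
        refine le_trans natDegree_mul_le ?_
        have : ((X - C β) ^ k).natDegree ≤ k := by
          refine le_trans natDegree_pow_le ?_
          rw [natDegree_X_sub_C]; omega
        omega
      rw [show n + (k + 1) = (n + k) + 1 by omega, pow_succ, pow_succ,
        show (X - C β) ^ k * (X - C β) * g = (X - C β) * ((X - C β) ^ k * g) by ring,
        myPhi_step hdeg, ih]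
      ring

lemma rootMult_pow_mul {p q : K[X]} (hp : p ≠ 0) (hq : q ≠ 0) (k : ℕ) (α : K) :
    rootMultiplicity α (p ^ k * q) = k * rootMultiplicity α p + rootMultiplicity α q := by
  induction k with
  | zero => simp
  | succ k ih =>
      rw [pow_succ, show p ^ k * p * q = p * (p ^ k * q) by ring,
        rootMultiplicity_mul (mul_ne_zero hp (mul_ne_zero (pow_ne_zero k hp) hq)), ih]
      ring

lemma quad_ne_zero (β : K) : (X ^ 2 - C β * X + 1 : K[X]) ≠ 0 := by
  intro h0
  have : ((X ^ 2 - C β * X + 1 : K[X])).eval 0 = 0 := by rw [h0, eval_zero]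
  simp at this

lemma myPhi_factor [Infinite K] {m : ℕ} {F : K[X]} (hF : F.Monic) (hFdeg : F.natDegree = m)
    (β : K) :
    ∃ G : K[X], G.eval β ≠ 0 ∧ G.natDegree ≤ m - rootMultiplicity β F ∧
      rootMultiplicity β F ≤ m ∧ myPhi m F =
      (X ^ 2 - C β * X + 1) ^ (rootMultiplicity β F) *
        myPhi (m - rootMultiplicity β F) G := by
  obtain ⟨G, hFeq, hnd⟩ := F.exists_eq_pow_rootMultiplicity_mul_and_not_dvd hF.ne_zero β
  set k := rootMultiplicity β F with hk
  have hGne : G ≠ 0 := by rintro rfl; exact hnd (dvd_zero _)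
  have hGβ : G.eval β ≠ 0 := fun hcon => hnd (dvd_iff_isRoot.mpr hcon)
  have hdegG : k + G.natDegree = m := by
    rw [← hFdeg, hFeq, natDegree_mul (pow_ne_zero _ (X_sub_C_ne_zero β)) hGne,
      natDegree_pow, natDegree_X_sub_C, mul_one]
  refine ⟨G, hGβ, by omega, by omega, ?_⟩
  have : m = (m - k) + k := by omega
  rw [hFeq, show m = (m - k) + k by omega, myPhi_pow_mul k (by omega) β,
    show m - k + k - k = m - k by omega]

lemma rootMult_myPhi [Infinite K] {m : ℕ} {F : K[X]} (hF : F.Monic) (hFdeg : F.natDegree = m)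
    {α : K} (hα : α ≠ 0) :
    rootMultiplicity α (myPhi m F) =
      rootMultiplicity (α + α⁻¹) F * rootMultiplicity α (X ^ 2 - C (α + α⁻¹) * X + 1) := by
  obtain ⟨G, hGβ, hGdeg, hkm, heq⟩ := myPhi_factor hF hFdeg (α + α⁻¹)
  set k := rootMultiplicity (α + α⁻¹) F with hk
  have hPhiG : (myPhi (m - k) G).eval α ≠ 0 := by
    rw [myPhi_eval_ne_zero hGdeg hα]
    exact mul_ne_zero (pow_ne_zero _ hα) hGβ
  rw [heq, rootMult_pow_mul (quad_ne_zero _) (fun h0 => hPhiG (by rw [h0, eval_zero])) k α,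
    rootMultiplicity_eq_zero hPhiG, add_zero, mul_comm]

section CharTwoSec
variable [CharP K 2]

lemma quad_mult_one : rootMultiplicity (1 : K) (X ^ 2 - C (0 : K) * X + 1) = 2 := by
  have : (X ^ 2 - C (0 : K) * X + 1 : K[X]) = (X - C 1) ^ 2 := by
    rw [map_zero, zero_mul, sub_zero, map_one, CharTwo.sub_eq_add, CharTwo.add_sq, one_pow]
  rw [this, rootMultiplicity_X_sub_C_pow]

lemma quad_mult_ne_one {α : K} (hα0 : α ≠ 0) (hα1 : α ≠ 1) :
    rootMultiplicity α (X ^ 2 - C (α + α⁻¹) * X + 1) = 1 := by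
  classical
  have hCinv : C α * C α⁻¹ = (1 : K[X]) := by rw [← C_mul, mul_inv_cancel₀ hα0, map_one]
  have factor : (X ^ 2 - C (α + α⁻¹) * X + 1 : K[X]) = (X - C α) * (X - C α⁻¹) := by
    rw [map_add]
    linear_combination -hCinv
  have hne : α ≠ α⁻¹ := by
    intro heq
    have h1 : α * α = 1 := by nth_rewrite 2 [heq]; exact mul_inv_cancel₀ hα0
    have h2 : (α + 1) ^ 2 = 0 := by
      rw [CharTwo.add_sq, one_pow, sq, h1]
      exact CharTwo.add_self_eq_zero 1
    have h3 := pow_eq_zero_iff (n := 2) (by norm_num) |>.mp h2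
    have h4 : α - 1 = 0 := by rw [sub_eq_add_neg, CharTwo.neg_eq]; exact h3
    exact hα1 (sub_eq_zero.mp h4)
  rw [factor, rootMultiplicity_mul (mul_ne_zero (X_sub_C_ne_zero α) (X_sub_C_ne_zero α⁻¹)),
    rootMultiplicity_X_sub_C_self, rootMultiplicity_X_sub_C, if_neg hne]

lemma one_add_inv_one : (1 : K) + 1⁻¹ = 0 := by
  rw [inv_one]; exact CharTwo.add_self_eq_zero 1

end CharTwoSec

end Helpers

/-- Let `q` be a power of 2 and `f` a monic polynomial of degree `m ≥ 1`
over `F_q`.  Let `h(x) = x^m f(x + x⁻¹) = ∑_i f_i x^{m-i} (x²+1)^i`.  Then: (i) `1` is a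
root of `h` iff `f(0) = 0`; (ii) if `f(0) = 0`, then `1` has multiplicity exactly two as a
root of `h` iff `0` is a simple root of `f`; (iii) every root of `h` in an algebraic
closure different from `1` is simple iff every root of `f` different from `0` is simple. -/
theorem stmt_4 (Fq : Type*) [Field Fq] [Fintype Fq] [CharP Fq 2]
    (m : ℕ) (hm : 1 ≤ m) (f : Polynomial Fq) (hf : f.Monic) (hdeg : f.natDegree = m)
    (h : Polynomial Fq)
    (hh : h = ∑ i ∈ Finset.range (m + 1), C (f.coeff i) * X ^ (m - i) * (X ^ 2 + 1) ^ i) :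
    (h.eval 1 = 0 ↔ f.eval 0 = 0) ∧
    (f.eval 0 = 0 →
      (Polynomial.rootMultiplicity (1 : Fq) h = 2 ↔
        Polynomial.rootMultiplicity (0 : Fq) f = 1)) ∧
    ((∀ α : AlgebraicClosure Fq, α ≠ 1 → Polynomial.aeval α h = 0 →
        Polynomial.rootMultiplicity α (h.map (algebraMap Fq (AlgebraicClosure Fq))) = 1) ↔
     (∀ α : AlgebraicClosure Fq, α ≠ 0 → Polynomial.aeval α f = 0 →
        Polynomial.rootMultiplicity α (f.map (algebraMap Fq (AlgebraicClosure Fq))) = 1)) := by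
  set K := AlgebraicClosure Fq
  set φ := algebraMap Fq K with hφ
  haveI : CharP K 2 := charP_of_injective_algebraMap φ.injective 2
  have hhf : h = myPhi m f := hh
  set F := f.map φ with hF
  have hFmon : F.Monic := hf.map φ
  have hFdeg : F.natDegree = m := by rw [hF, hf.natDegree_map, hdeg]
  have hmap : h.map φ = myPhi m F := by
    rw [hhf, myPhi, Polynomial.map_sum, myPhi]
    refine Finset.sum_congr rfl fun i _ => ?_
    simp only [Polynomial.map_mul, Polynomial.map_pow, Polynomial.map_add, map_C, map_X,
      Polynomial.map_one, coeff_map, hF]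
  have hcoeff0 : f.coeff 0 = f.eval 0 := coeff_zero_eq_eval_zero f
  -- part (i)
  have e1 : h.eval 1 = f.eval 0 := by
    rw [hhf, myPhi_eval_ne_zero hdeg.le one_ne_zero, one_add_inv_one, one_pow, one_mul]
  refine ⟨by rw [e1], ?_, ?_⟩
  -- part (ii)
  · intro _
    have key := rootMult_myPhi hFmon hFdeg (α := (1 : K)) one_ne_zero
    rw [one_add_inv_one, quad_mult_one] at key
    have t1 : rootMultiplicity (1 : Fq) h = rootMultiplicity (1 : K) (h.map φ) := by
      have := eq_rootMultiplicity_map (p := h) φ.injective 1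
      rwa [map_one] at this
    have t2 : rootMultiplicity (0 : Fq) f = rootMultiplicity (0 : K) F := by
      have := eq_rootMultiplicity_map (p := f) φ.injective 0
      rwa [map_zero] at this
    rw [t1, hmap, key, t2]
    omega
  -- part (iii)
  · have haev : ∀ (p : Polynomial Fq) (α : K), aeval α p = (p.map φ).eval α := fun p α => by
      rw [aeval_def, eval_map]
    have hevalH : ∀ α : K, α ≠ 0 → (h.map φ).eval α = α ^ m * F.eval (α + α⁻¹) := fun α hα => by
      rw [hmap, myPhi_eval_ne_zero hFdeg.le hα]
    have hH0 : (h.map φ).eval 0 = 1 := by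
      rw [hmap, myPhi_eval_zero, ← hFdeg, hFmon.coeff_natDegree]
    constructor
    · intro Hside β hβ0 hβroot
      have hFβ : F.eval β = 0 := by rw [← haev]; exact hβroot
      set P : K[X] := X ^ 2 - C β * X + 1 with hP
      have hPform : P = C 1 * X ^ 2 + C (-β) * X + C 1 := by
        simp only [map_one, map_neg, one_mul, hP]; ring
      obtain ⟨α, hαroot⟩ := IsAlgClosed.exists_root P
        (by rw [hPform, degree_quadratic one_ne_zero]; exact (by decide : (2 : WithBot ℕ) ≠ 0))
      have heval : α ^ 2 - β * α + 1 = 0 := by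
        have := hαroot
        simpa [hP, IsRoot.def] using this
      have hα0 : α ≠ 0 := by
        rintro rfl
        simp at heval
      have hα1 : α ≠ 1 := by
        rintro rfl
        apply hβ0
        rw [one_pow, mul_one] at heval
        have : β = 1 + 1 := by linear_combination -heval
        rw [this]; exact CharTwo.add_self_eq_zero 1
      have hβval : α + α⁻¹ = β := by
        apply mul_left_cancel₀ hα0
        rw [mul_add, mul_inv_cancel₀ hα0]
        linear_combination heval
      have hroot : aeval α h = 0 := by
        rw [haev, hevalH α hα0, hβval, hFβ, mul_zero]
      have := Hside α hα1 hroot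
      rw [hmap, rootMult_myPhi hFmon hFdeg hα0, quad_mult_ne_one hα0 hα1, mul_one, hβval]
        at this
      exact this
    · intro Fside α hα1 hαroot
      have hα0 : α ≠ 0 := by
        rintro rfl
        rw [haev, hH0] at hαroot
        exact one_ne_zero hαroot
      set β := α + α⁻¹ with hβ
      have hβ0 : β ≠ 0 := by
        intro h0
        apply hα1
        have hsq : α ^ 2 + 1 = 0 := by
          have : α * β = α ^ 2 + 1 := by rw [hβ, mul_add, mul_inv_cancel₀ hα0, sq]
          rw [h0, mul_zero] at this
          exact this.symm
        have h2 : (α + 1) ^ 2 = 0 := by rw [CharTwo.add_sq, one_pow]; exact hsq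
        have h3 := pow_eq_zero_iff (n := 2) (by norm_num) |>.mp h2
        have h4 : α - 1 = 0 := by rw [sub_eq_add_neg, CharTwo.neg_eq]; exact h3
        exact sub_eq_zero.mp h4
      have hFβ : F.eval β = 0 := by
        have := hαroot
        rw [haev, hevalH α hα0] at this
        exact (mul_eq_zero.mp this).resolve_left (pow_ne_zero m hα0)
      have hFm := Fside β hβ0 (by rw [haev]; exact hFβ)
      rw [hmap, rootMult_myPhi hFmon hFdeg hα0, ← hβ, hFm, quad_mult_ne_one hα0 hα1]
end

section
/- Let q be any prime power and, for n ≥ 1, let Z_n be the number of monic polynomials f of degree n in F_q[x] with f(0) = 0 and with no repeated irreducible factors (i.e. f is squarefree). Then Z_1 = 1; if n ≥ 3 is odd, Z_n = (q^{n-1} - 1)(q - 1)/(q + 1); and if n ≥ 2 is even, Z_n = (q^{n-1} + 1)(q - 1)/(q + 1). -/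
/-!
Every monic polynomial over a field factors uniquely as `s * d ^ 2` with `s`, `d` monic and `s`
squarefree. Counting the monic polynomials of degree `n` over `𝔽_q` this way gives
`q ^ n = ∑ k, S (n - 2 * k) * q ^ k`, where `S m` is the number of squarefree monic polynomials of
degree `m`; hence `S n = q ^ n - q ^ (n - 1)` for `n ≥ 2`. Multiplication by `X` identifies the
squarefree monic polynomials of degree `m` with `f(0) ≠ 0` with those of degree `m + 1` with
`f(0) = 0`, so their numbers `Z` satisfy `Z (m + 1) + Z m = S m`, and solving this recursion from
`Z 1 = 1` gives the formulas.
-/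

open Polynomial

theorem Nat.card_subtype_and_add_card_subtype_and_not {α : Type*} {p : α → Prop}
    [Finite {a // p a}] (q : α → Prop) :
    Nat.card {a // p a ∧ q a} + Nat.card {a // p a ∧ ¬q a} = Nat.card {a // p a} := by
  classical
  have e := Equiv.subtypeSubtypeEquivSubtypeInter p
  have : Finite {a // p a ∧ q a} := .of_equiv _ (e q)
  have : Finite {a // p a ∧ ¬q a} := .of_equiv _ (e fun a => ¬q a)
  rw [← Nat.card_sum]
  exact Nat.card_congr (((e q).symm.sumCongr (e fun a => ¬q a).symm).trans (Equiv.sumCompl _))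

namespace UniqueFactorizationMonoid

variable {R : Type*} [CommMonoidWithZero R] [UniqueFactorizationMonoid R]

theorem exists_squarefree_mul_sq {a : R} (ha : a ≠ 0) :
    ∃ s d : R, Squarefree s ∧ a = s * d ^ 2 := by
  induction a using induction_on_prime with
  | h₁ => exact absurd rfl ha
  | h₂ u hu => exact ⟨u, 1, hu.squarefree, by rw [one_pow, mul_one]⟩
  | h₃ a p ha0 hp ih =>
    obtain ⟨s, d, hs, rfl⟩ := ih ha0
    by_cases hps : p ∣ s
    · obtain ⟨t, rfl⟩ := hps
      exact ⟨t, p * d, hs.of_mul_right, by rw [mul_pow, sq p]; ac_rfl⟩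
    · refine ⟨p * s, d, ?_, (mul_assoc _ _ _).symm⟩
      exact squarefree_mul_iff.mpr
        ⟨hp.irreducible.isRelPrime_iff_not_dvd.mpr hps, hp.squarefree, hs⟩

/-- The multiplicity of a prime in `s * d ^ 2` is `e + 2 * f` with `e ≤ 1`, so it determines its
multiplicities `e` in `s` and `f` in `d`. -/
theorem associated_of_squarefree_mul_sq_eq [Nontrivial R] [NormalizationMonoid R]
    {s s' d d' : R} (hs : Squarefree s) (hs' : Squarefree s') (hd : d ≠ 0) (hd' : d' ≠ 0)
    (h : s * d ^ 2 = s' * d' ^ 2) : Associated s s' ∧ Associated d d' := by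
  classical
  have hcount (p : R) : (normalizedFactors s).count p + 2 * (normalizedFactors d).count p =
      (normalizedFactors s').count p + 2 * (normalizedFactors d').count p := by
    simpa [normalizedFactors_mul hs.ne_zero (pow_ne_zero 2 hd),
      normalizedFactors_mul hs'.ne_zero (pow_ne_zero 2 hd'), normalizedFactors_pow] using
      congrArg (fun a => (normalizedFactors a).count p) h
  have hle := Multiset.nodup_iff_count_le_one.mp
    ((squarefree_iff_nodup_normalizedFactors hs.ne_zero).mp hs)
  have hle' := Multiset.nodup_iff_count_le_one.mp
    ((squarefree_iff_nodup_normalizedFactors hs'.ne_zero).mp hs')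
  rw [associated_iff_normalizedFactors_eq_normalizedFactors hs.ne_zero hs'.ne_zero,
    associated_iff_normalizedFactors_eq_normalizedFactors hd hd']
  constructor <;> ext p <;> have := hcount p <;> have := hle p <;> have := hle' p <;> omega

end UniqueFactorizationMonoid

namespace Polynomial

section Field

variable {K : Type*} [Field K]

theorem Monic.exists_squarefree_mul_sq {f : K[X]} (hf : f.Monic) :
    ∃ s d : K[X], s.Monic ∧ d.Monic ∧ Squarefree s ∧ f = s * d ^ 2 := by
  classical
  obtain ⟨s, d, hs, hsd⟩ := UniqueFactorizationMonoid.exists_squarefree_mul_sq hf.ne_zero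
  have hd : d ≠ 0 := by rintro rfl; exact hf.ne_zero (by simpa using hsd)
  refine ⟨normalize s, normalize d, monic_normalize hs.ne_zero, monic_normalize hd,
    (normalize_associated s).squarefree_iff.mpr hs, ?_⟩
  rw [← hf.normalize_eq_self, hsd, sq, sq, normalize_mul, normalize_mul]

theorem Monic.eq_of_squarefree_mul_sq_eq {s s' d d' : K[X]} (hs : s.Monic) (hs' : s'.Monic)
    (hd : d.Monic) (hd' : d'.Monic) (hsq : Squarefree s) (hsq' : Squarefree s')
    (h : s * d ^ 2 = s' * d' ^ 2) : s = s' ∧ d = d' := by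
  classical
  obtain ⟨hss', hdd'⟩ := UniqueFactorizationMonoid.associated_of_squarefree_mul_sq_eq
    hsq hsq' hd.ne_zero hd'.ne_zero h
  exact ⟨eq_of_monic_of_associated hs hs' hss', eq_of_monic_of_associated hd hd' hdd'⟩

variable (K) in
noncomputable def monicSquarefreeCount (n : ℕ) : ℕ :=
  Nat.card {f : K[X] // f.Monic ∧ f.natDegree = n ∧ Squarefree f}

variable (K) in
noncomputable def monicSquarefreeRootZeroCount (n : ℕ) : ℕ :=
  Nat.card {f : K[X] // f.Monic ∧ f.natDegree = n ∧ f.coeff 0 = 0 ∧ Squarefree f}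

variable (K) in
noncomputable def squarefreeMulSqEquiv (n : ℕ) :
    (Σ k : Fin (n / 2 + 1),
      {s : K[X] // s.Monic ∧ s.natDegree = n - 2 * k ∧ Squarefree s} ×
        {d : K[X] // d.Monic ∧ d.natDegree = k}) ≃
      {f : K[X] // f.Monic ∧ f.natDegree = n} := by
  refine Equiv.ofBijective (fun ⟨k, s, d⟩ => ⟨s * d ^ 2, s.2.1.mul (d.2.1.pow 2), ?_⟩)
    ⟨?_, ?_⟩
  · have hk : 2 * (k : ℕ) ≤ n := by omega
    rw [s.2.1.natDegree_mul (d.2.1.pow 2), natDegree_pow, s.2.2.1, d.2.2]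
    omega
  · rintro ⟨k, s, d⟩ ⟨k', s', d'⟩ h
    obtain ⟨hs, hd⟩ := s.2.1.eq_of_squarefree_mul_sq_eq s'.2.1 d.2.1 d'.2.1 s.2.2.2 s'.2.2.2
      (congrArg Subtype.val h)
    obtain rfl : k = k' := Fin.ext (d.2.2.symm.trans (hd ▸ d'.2.2))
    obtain rfl : s = s' := Subtype.ext hs
    obtain rfl : d = d' := Subtype.ext hd
    rfl
  · rintro ⟨f, hf, rfl⟩
    obtain ⟨s, d, hs, hd, hsq, rfl⟩ := hf.exists_squarefree_mul_sq
    have hdeg : (s * d ^ 2).natDegree = s.natDegree + 2 * d.natDegree := by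
      rw [hs.natDegree_mul (hd.pow 2), natDegree_pow, mul_comm]
    refine ⟨⟨⟨d.natDegree, by omega⟩, ⟨s, hs, ?_, hsq⟩, ⟨d, hd, rfl⟩⟩, rfl⟩
    simp only [hdeg]
    omega

noncomputable def mulXEquiv (m : ℕ) :
    {g : K[X] // g.Monic ∧ g.natDegree = m ∧ g.coeff 0 ≠ 0 ∧ Squarefree g} ≃
      {f : K[X] // f.Monic ∧ f.natDegree = m + 1 ∧ f.coeff 0 = 0 ∧ Squarefree f} := by
  refine Equiv.ofBijective (fun g => ⟨X * g.1, monic_X.mul g.2.1, ?_, coeff_X_mul_zero g.1, ?_⟩)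
    ⟨fun g g' h => Subtype.ext (mul_left_cancel₀ X_ne_zero (congrArg Subtype.val h :)),
      ?_⟩
  · rw [monic_X.natDegree_mul g.2.1, natDegree_X, g.2.2.1, add_comm]
  · have hcop : IsRelPrime X g.1 :=
      prime_X.irreducible.isRelPrime_iff_not_dvd.mpr (mt X_dvd_iff.mp g.2.2.2.1)
    exact squarefree_mul_iff.mpr ⟨hcop, prime_X.squarefree, g.2.2.2.2⟩
  · rintro ⟨f, hf, hdeg, hf0, hsq⟩
    obtain ⟨g, rfl⟩ := X_dvd_iff.mpr hf0
    have hg : g.Monic := monic_X.of_mul_monic_left hf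
    refine ⟨⟨g, hg, ?_, fun hg0 => ?_, hsq.of_mul_right⟩, rfl⟩
    · rw [monic_X.natDegree_mul hg, natDegree_X] at hdeg
      omega
    · obtain ⟨h, rfl⟩ := X_dvd_iff.mpr hg0
      exact not_isUnit_X (hsq X ⟨h, by ring⟩)

variable (K) in
theorem monicSquarefreeRootZeroCount_zero : monicSquarefreeRootZeroCount K 0 = 0 := by
  rw [monicSquarefreeRootZeroCount, Nat.card_eq_zero]
  refine .inl ⟨fun ⟨f, hf, hdeg, hf0, _⟩ => ?_⟩
  rw [hf.natDegree_eq_zero.mp hdeg, coeff_one_zero] at hf0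
  exact one_ne_zero hf0

end Field

variable {K : Type*} [Field K] [Fintype K]

instance finite_monic_natDegree_eq (n : ℕ) : Finite {f : K[X] // f.Monic ∧ f.natDegree = n} :=
  .of_equiv _ ((monicEquivDegreeLT n).trans (degreeLTEquiv K n).toEquiv).symm

instance finite_monic_natDegree_eq_and (n : ℕ) (P : K[X] → Prop) :
    Finite {f : K[X] // f.Monic ∧ f.natDegree = n ∧ P f} :=
  .of_injective (fun f => (⟨f.1, f.2.1, f.2.2.1⟩ : {f : K[X] // f.Monic ∧ f.natDegree = n}))
    fun _ _ h => Subtype.ext (congrArg Subtype.val h :)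

theorem card_monic_natDegree_eq (n : ℕ) :
    Nat.card {f : K[X] // f.Monic ∧ f.natDegree = n} = Fintype.card K ^ n := by
  rw [Nat.card_congr ((monicEquivDegreeLT n).trans (degreeLTEquiv K n).toEquiv)]
  simp

theorem pow_card_eq_sum_monicSquarefreeCount (n : ℕ) :
    Fintype.card K ^ n = ∑ k ∈ Finset.range (n / 2 + 1),
      monicSquarefreeCount K (n - 2 * k) * Fintype.card K ^ k := by
  rw [← card_monic_natDegree_eq, ← Nat.card_congr (squarefreeMulSqEquiv K n), Nat.card_sigma,
    ← Fin.sum_univ_eq_sum_range]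
  simp only [Nat.card_prod, card_monic_natDegree_eq, monicSquarefreeCount]

variable (K) in
theorem monicSquarefreeCount_zero : monicSquarefreeCount K 0 = 1 := by
  simpa using (pow_card_eq_sum_monicSquarefreeCount (K := K) 0).symm

variable (K) in
theorem monicSquarefreeCount_one : monicSquarefreeCount K 1 = Fintype.card K := by
  simpa using (pow_card_eq_sum_monicSquarefreeCount (K := K) 1).symm

theorem monicSquarefreeCount_add_pow_pred {n : ℕ} (hn : 2 ≤ n) :
    monicSquarefreeCount K n + Fintype.card K ^ (n - 1) = Fintype.card K ^ n := by
  obtain ⟨m, rfl⟩ := Nat.exists_eq_add_of_le' hn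
  have hshift : ∑ k ∈ Finset.range (m / 2 + 1),
      monicSquarefreeCount K (m + 2 - 2 * (k + 1)) * Fintype.card K ^ (k + 1) =
      Fintype.card K ^ (m + 2 - 1) := by
    rw [show m + 2 - 1 = m + 1 by omega, pow_succ, pow_card_eq_sum_monicSquarefreeCount m,
      Finset.sum_mul]
    refine Finset.sum_congr rfl fun k _ => ?_
    rw [show m + 2 - 2 * (k + 1) = m - 2 * k by omega, pow_succ, mul_assoc]
  rw [pow_card_eq_sum_monicSquarefreeCount (m + 2), show (m + 2) / 2 = m / 2 + 1 by omega,
    Finset.sum_range_succ', hshift]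
  simp only [mul_zero, Nat.sub_zero, pow_zero, mul_one, add_comm]

theorem monicSquarefreeRootZeroCount_succ_add (m : ℕ) :
    monicSquarefreeRootZeroCount K (m + 1) + monicSquarefreeRootZeroCount K m =
      monicSquarefreeCount K m := by
  rw [monicSquarefreeRootZeroCount, ← Nat.card_congr (mulXEquiv m), monicSquarefreeRootZeroCount,
    monicSquarefreeCount, ← Nat.card_subtype_and_add_card_subtype_and_not
      (p := fun f : K[X] => f.Monic ∧ f.natDegree = m ∧ Squarefree f) (fun f => f.coeff 0 = 0),
    add_comm]
  congr 1 <;> exact Nat.card_congr (Equiv.subtypeEquivRight fun f => by tauto)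

variable (K) in
theorem monicSquarefreeRootZeroCount_one : monicSquarefreeRootZeroCount K 1 = 1 := by
  simpa [monicSquarefreeRootZeroCount_zero, monicSquarefreeCount_zero] using
    monicSquarefreeRootZeroCount_succ_add (K := K) 0

theorem monicSquarefreeRootZeroCount_mul_card_add_one {n : ℕ} (hn : 2 ≤ n) :
    (monicSquarefreeRootZeroCount K n : ℤ) * (Fintype.card K + 1) =
      (Fintype.card K ^ (n - 1) - (-1) ^ (n - 1)) * (Fintype.card K - 1) := by
  induction n, hn using Nat.le_induction with
  | base =>
    have h := monicSquarefreeRootZeroCount_succ_add (K := K) 1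
    rw [monicSquarefreeRootZeroCount_one, monicSquarefreeCount_one] at h
    have h' : (monicSquarefreeRootZeroCount K 2 : ℤ) + 1 = Fintype.card K := by exact_mod_cast h
    linear_combination (Fintype.card K + 1 : ℤ) * h'
  | succ n hn ih =>
    have h := monicSquarefreeRootZeroCount_succ_add (K := K) n
    have hS := monicSquarefreeCount_add_pow_pred (K := K) hn
    obtain ⟨m, rfl⟩ := Nat.exists_eq_add_of_le' (by omega : 1 ≤ n)
    have h' : (monicSquarefreeRootZeroCount K (m + 1 + 1) : ℤ) +
        monicSquarefreeRootZeroCount K (m + 1) + Fintype.card K ^ m =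
        Fintype.card K ^ (m + 1) := by
      exact_mod_cast h ▸ hS
    simp only [Nat.add_sub_cancel] at ih ⊢
    linear_combination (Fintype.card K + 1 : ℤ) * h' - ih

end Polynomial

/-- Let `q` be a prime power and, for `n ≥ 1`, let `Z_n` be the number of
monic squarefree polynomials `f` of degree `n` over `F_q` with `f(0) = 0`.  Then
`Z_1 = 1`; `Z_n = (q^{n-1} - 1)(q - 1)/(q + 1)` for odd `n ≥ 3`; and
`Z_n = (q^{n-1} + 1)(q - 1)/(q + 1)` for even `n ≥ 2`. -/
theorem stmt_5 (Fq : Type*) [Field Fq] [Fintype Fq] (q : ℕ) (hq : Fintype.card Fq = q)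
    (n : ℕ) (Z : ℕ)
    (hZ : Z = Nat.card {f : Polynomial Fq //
        f.Monic ∧ f.natDegree = n ∧ f.coeff 0 = 0 ∧ Squarefree f}) :
    (n = 1 → Z = 1) ∧
    (3 ≤ n → Odd n → Z * (q + 1) = (q ^ (n - 1) - 1) * (q - 1)) ∧
    (2 ≤ n → Even n → Z * (q + 1) = (q ^ (n - 1) + 1) * (q - 1)) := by
  obtain rfl : Z = monicSquarefreeRootZeroCount Fq n := hZ
  subst hq
  have hq : 1 ≤ Fintype.card Fq := Fintype.card_pos
  refine ⟨fun hn => hn ▸ monicSquarefreeRootZeroCount_one Fq, fun hn hodd => ?_,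
    fun hn heven => ?_⟩
  · have h := monicSquarefreeRootZeroCount_mul_card_add_one (K := Fq) (by omega : 2 ≤ n)
    rw [(Nat.Odd.sub_odd hodd odd_one).neg_one_pow] at h
    zify [hq, Nat.one_le_pow _ _ hq]
    exact h
  · have h := monicSquarefreeRootZeroCount_mul_card_add_one (K := Fq) hn
    rw [(Nat.Even.sub_odd (by omega) heven odd_one).neg_one_pow] at h
    zify [hq]
    linear_combination h
end

section
/- Let q be a power of an odd prime and let f be a monic polynomial in F_q[x] of degree m ≥ 1 such that 2 is a root of f, f(-2) ≠ 0, and all roots of f in an algebraic closure are simple. Define h(x) = x^m f(x + x^{-1}), a monic polynomial of degree 2m in F_q[x]. Then 1 is a root of h of multiplicity exactly two, -1 is not a root of h, and every root of h different from 1 is a simple root. -/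
open Polynomial

noncomputable def Hpoly {F : Type*} [Field F] (m : ℕ) (p : F[X]) : F[X] :=
  ∑ i ∈ Finset.range (m + 1), C (p.coeff i) * X ^ (m - i) * (X ^ 2 + 1) ^ i

lemma Hpoly_eval {F : Type*} [Field F] (m : ℕ) (p : F[X]) (hd : p.natDegree < m + 1)
    (α : F) (hα : α ≠ 0) :
    (Hpoly m p).eval α = α ^ m * p.eval (α + α⁻¹) := by
  rw [Hpoly, eval_finset_sum, p.eval_eq_sum_range' hd, Finset.mul_sum]
  refine Finset.sum_congr rfl fun i hi => ?_
  simp only [eval_mul, eval_pow, eval_C, eval_X, eval_add, eval_one]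
  have hi' : i ≤ m := Nat.lt_succ_iff.mp (Finset.mem_range.mp hi)
  have h1 : α ^ m = α ^ (m - i) * α ^ i := by rw [← pow_add, Nat.sub_add_cancel hi']
  have key : (α ^ 2 + 1) = α * (α + α⁻¹) := by field_simp
  rw [key, mul_pow, h1]; ring

lemma Hpoly_eval_zero {F : Type*} [Field F] (m : ℕ) (p : F[X]) :
    (Hpoly m p).eval 0 = p.coeff m := by
  rw [Hpoly, eval_finset_sum, Finset.sum_eq_single m]
  · simp
  · intro i hi hne
    have hi' : i ≤ m := Nat.lt_succ_iff.mp (Finset.mem_range.mp hi)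
    have : m - i ≠ 0 := Nat.sub_ne_zero_of_lt (lt_of_le_of_ne hi' hne)
    simp [zero_pow this]
  · intro habs; exact absurd (Finset.self_mem_range_succ m) habs

lemma Hpoly_map {F F' : Type*} [Field F] [Field F'] (φ : F →+* F') (m : ℕ) (p : F[X]) :
    (Hpoly m p).map φ = Hpoly m (p.map φ) := by
  simp [Hpoly, Polynomial.map_sum, Polynomial.map_mul, Polynomial.map_pow,
    Polynomial.map_add, Polynomial.map_one, coeff_map]

lemma Hpoly_factor {F : Type*} [Field F] [Infinite F] (m : ℕ) (hm : 1 ≤ m) (β : F)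
    (w : F[X]) (hw : w.natDegree < m) :
    Hpoly m ((X - C β) * w) = (X ^ 2 - C β * X + 1) * Hpoly (m - 1) w := by
  apply Polynomial.eq_of_infinite_eval_eq
  have hsub : {x : F | x ≠ 0} ⊆
      {x | eval x (Hpoly m ((X - C β) * w)) = eval x ((X ^ 2 - C β * X + 1) * Hpoly (m - 1) w)} := by
    intro x hx
    have hx : x ≠ 0 := hx
    have hdeg : ((X - C β) * w).natDegree < m + 1 := by
      calc ((X - C β) * w).natDegree ≤ (X - C β).natDegree + w.natDegree := natDegree_mul_le
        _ ≤ 1 + w.natDegree := by rw [natDegree_X_sub_C]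
        _ < m + 1 := by omega
    have hdw : w.natDegree < m - 1 + 1 := by omega
    simp only [Set.mem_setOf_eq]
    rw [Hpoly_eval m _ hdeg x hx, eval_mul, eval_mul, Hpoly_eval (m - 1) w hdw x hx]
    simp only [eval_mul, eval_sub, eval_add, eval_pow, eval_X, eval_C, eval_one]
    have hxm : x ^ m = x ^ (m - 1) * x := by
      rw [← pow_succ, Nat.sub_add_cancel hm]
    rw [hxm]
    have key : x * (x + x⁻¹ - β) = x ^ 2 - β * x + 1 := by field_simp; ring
    calc x ^ (m - 1) * x * ((x + x⁻¹ - β) * eval (x + x⁻¹) w)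
        = (x * (x + x⁻¹ - β)) * (x ^ (m - 1) * eval (x + x⁻¹) w) := by ring
      _ = (x ^ 2 - β * x + 1) * (x ^ (m - 1) * eval (x + x⁻¹) w) := by rw [key]
  apply Set.Infinite.mono hsub
  have : ({x : F | x ≠ 0}ᶜ).Finite := by
    convert Set.finite_singleton (0 : F) using 1
    ext x; simp
  exact Set.infinite_of_finite_compl this

/-- Let `q` be a power of an odd prime, and let `f` be a monic polynomial
of degree `m ≥ 1` over `F_q` such that `2` is a root of `f`, `f(-2) ≠ 0`, and all roots of
`f` in an algebraic closure are simple.  Let `h(x) = x^m f(x + x⁻¹)`.  Then `1` is a root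
of `h` of multiplicity exactly two, `-1` is not a root of `h`, and every root of `h`
different from `1` is simple. -/
theorem stmt_6 (Fq : Type*) [Field Fq] [Fintype Fq] (p : ℕ) [CharP Fq p] (hp : p ≠ 2)
    (m : ℕ) (hm : 1 ≤ m) (f : Polynomial Fq) (hf : f.Monic) (hdeg : f.natDegree = m)
    (h2 : f.eval 2 = 0) (hneg2 : f.eval (-2) ≠ 0)
    (hsimple : ∀ α : AlgebraicClosure Fq, Polynomial.aeval α f = 0 →
      Polynomial.rootMultiplicity α (f.map (algebraMap Fq (AlgebraicClosure Fq))) = 1)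
    (h : Polynomial Fq)
    (hh : h = ∑ i ∈ Finset.range (m + 1), C (f.coeff i) * X ^ (m - i) * (X ^ 2 + 1) ^ i) :
    Polynomial.rootMultiplicity (1 : Fq) h = 2 ∧
    h.eval (-1) ≠ 0 ∧
    ∀ α : AlgebraicClosure Fq, α ≠ 1 → Polynomial.aeval α h = 0 →
      Polynomial.rootMultiplicity α (h.map (algebraMap Fq (AlgebraicClosure Fq))) = 1 := by
  set K := AlgebraicClosure Fq with hK
  set φ := algebraMap Fq K with hφ
  have hφinj : Function.Injective φ := φ.injective
  have hh' : h = Hpoly m f := hh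
  have hf0 : f ≠ 0 := hf.ne_zero
  have hdf : f.natDegree < m + 1 := by omega
  -- factorization f = (X - C 2) * g over Fq
  set g : Fq[X] := f /ₘ (X - C 2) with hg
  have hfg : (X - C (2 : Fq)) * g = f := (mul_divByMonic_eq_iff_isRoot).mpr h2
  have hg0 : g ≠ 0 := by
    intro hz; rw [hz, mul_zero] at hfg; exact hf0 hfg.symm
  have hdg : g.natDegree = m - 1 := by
    have := natDegree_mul (X_sub_C_ne_zero (2 : Fq)) hg0
    rw [hfg, natDegree_X_sub_C, hdeg] at this
    omega
  -- mapped objects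
  have hfK0 : f.map φ ≠ 0 := fun hz => hf0 (Polynomial.map_eq_zero_iff hφinj |>.mp hz)
  have hgK0 : g.map φ ≠ 0 := fun hz => hg0 (Polynomial.map_eq_zero_iff hφinj |>.mp hz)
  have hφ2 : φ 2 = 2 := map_ofNat φ 2
  have hfgK : (X - C (2 : K)) * g.map φ = f.map φ := by
    have := congrArg (Polynomial.map φ) hfg
    simpa [Polynomial.map_mul, Polynomial.map_sub, map_C, hφ2] using this
  -- g.eval 2 ≠ 0
  have ha2 : (Polynomial.aeval (2 : K)) f = 0 := by
    rw [aeval_def, ← hφ2, Polynomial.eval₂_at_apply, h2, map_zero]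
  have hmult2 := hsimple 2 ha2
  have hgK2 : (g.map φ).eval 2 ≠ 0 := by
    rw [← hfgK] at hmult2
    rw [rootMultiplicity_mul (by rw [hfgK]; exact hfK0), rootMultiplicity_X_sub_C_self] at hmult2
    have : rootMultiplicity (2 : K) (g.map φ) = 0 := by omega
    intro habs
    have := (rootMultiplicity_eq_zero_iff.mp this) habs
    exact hgK0 this
  have hg2 : g.eval 2 ≠ 0 := by
    intro habs
    apply hgK2
    rw [← hφ2, Polynomial.eval_map, Polynomial.eval₂_at_apply, habs, map_zero]
  -- key factorization of h over Fq
  have hKfac : Hpoly m (f.map φ) = ((X : K[X]) ^ 2 - C 2 * X + 1) * Hpoly (m - 1) (g.map φ) := by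
    rw [← hfgK]
    exact Hpoly_factor m hm 2 (g.map φ) (by rw [natDegree_map, hdg]; omega)
  have hfacFq : h = ((X : Fq[X]) ^ 2 - C 2 * X + 1) * Hpoly (m - 1) g := by
    apply Polynomial.map_injective φ hφinj
    rw [hh', Hpoly_map, hKfac]
    simp [Polynomial.map_mul, Polynomial.map_sub, Polynomial.map_add, Polynomial.map_pow,
      Hpoly_map, hφ2]
  have hquad : ((X : Fq[X]) ^ 2 - C 2 * X + 1) = (X - C 1) ^ 2 := by
    rw [C_1, show (C (2 : Fq)) = 2 from map_ofNat C 2]; ring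
  -- G := Hpoly (m-1) g, G(1) = g(2) ≠ 0
  have hdg' : g.natDegree < m - 1 + 1 := by omega
  have hG1 : (Hpoly (m - 1) g).eval 1 = g.eval 2 := by
    rw [Hpoly_eval (m - 1) g hdg' 1 one_ne_zero]
    norm_num
  have hG0 : Hpoly (m - 1) g ≠ 0 := by
    intro hz; rw [hz, eval_zero] at hG1; exact hg2 hG1.symm
  refine ⟨?_, ?_, ?_⟩
  · -- multiplicity of 1 is 2
    rw [hfacFq, hquad, rootMultiplicity_mul
      (mul_ne_zero (pow_ne_zero 2 (X_sub_C_ne_zero 1)) hG0),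
      rootMultiplicity_X_sub_C_pow, rootMultiplicity_eq_zero]
    · intro habs
      exact hg2 (by rw [← hG1]; exact habs)
  · -- h(-1) ≠ 0
    rw [hh', Hpoly_eval m f hdf (-1) (by norm_num)]
    have : (-1 : Fq) + (-1)⁻¹ = -2 := by norm_num
    rw [this]
    intro habs
    rcases mul_eq_zero.mp habs with h1 | h1
    · exact pow_ne_zero m (by norm_num : (-1 : Fq) ≠ 0) h1
    · exact hneg2 h1
  · -- simple roots away from 1
    intro α hα1 hαh
    have hhK : h.map φ = Hpoly m (f.map φ) := by rw [hh', Hpoly_map]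
    have hαeval : (h.map φ).eval α = 0 := by
      rwa [Polynomial.eval_map, ← aeval_def]
    have hα0 : α ≠ 0 := by
      intro hz
      rw [hz, hhK, Hpoly_eval_zero] at hαeval
      have : (f.map φ).coeff m = 1 := by
        have : (f.map φ).Monic := hf.map φ
        rw [← hdeg]
        simpa [Polynomial.coeff_map] using congrArg φ hf.coeff_natDegree
      rw [this] at hαeval
      exact one_ne_zero hαeval
    set β : K := α + α⁻¹ with hβ
    have hdfK : (f.map φ).natDegree < m + 1 := by rw [natDegree_map, hdeg]; omega
    have hfβ : (f.map φ).eval β = 0 := by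
      rw [hhK, Hpoly_eval m _ hdfK α hα0] at hαeval
      rcases mul_eq_zero.mp hαeval with h1 | h1
      · exact absurd h1 (pow_ne_zero m hα0)
      · exact h1
    have haβ : (Polynomial.aeval β) f = 0 := by
      rw [aeval_def, ← Polynomial.eval_map]; exact hfβ
    have hmultβ := hsimple β haβ
    -- factor f.map φ = (X - C β) * w
    set w : K[X] := (f.map φ) /ₘ (X - C β) with hw
    have hfw : (X - C β) * w = f.map φ := (mul_divByMonic_eq_iff_isRoot).mpr hfβ
    have hw0 : w ≠ 0 := by
      intro hz; rw [hz, mul_zero] at hfw; exact hfK0 hfw.symm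
    have hdw : w.natDegree = m - 1 := by
      have := natDegree_mul (X_sub_C_ne_zero β) hw0
      rw [hfw, natDegree_X_sub_C, natDegree_map, hdeg] at this
      omega
    have hwβ : w.eval β ≠ 0 := by
      rw [← hfw, rootMultiplicity_mul (by rw [hfw]; exact hfK0),
        rootMultiplicity_X_sub_C_self] at hmultβ
      have : rootMultiplicity β w = 0 := by omega
      intro habs
      exact hw0 ((rootMultiplicity_eq_zero_iff.mp this) habs)
    -- h.map φ = (X - C α)(X - C α⁻¹) * W
    have hfacK : h.map φ = ((X : K[X]) ^ 2 - C β * X + 1) * Hpoly (m - 1) w := by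
      rw [hhK, ← hfw]
      exact Hpoly_factor m hm β w (by omega)
    have hαinv : α * α⁻¹ = 1 := mul_inv_cancel₀ hα0
    have hquadK : ((X : K[X]) ^ 2 - C β * X + 1) = (X - C α) * (X - C α⁻¹) := by
      have : (C β : K[X]) = C α + C α⁻¹ := by rw [hβ, map_add]
      rw [this]
      have h1 : (C α : K[X]) * C α⁻¹ = 1 := by rw [← map_mul, hαinv, map_one]
      ring_nf
      rw [h1]
      ring
    -- α ≠ α⁻¹
    have hαne : α ≠ α⁻¹ := by
      intro habs
      have hα2 : α ^ 2 = 1 := by rw [pow_two]; nth_rewrite 2 [habs]; exact hαinv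
      have : (α - 1) * (α + 1) = 0 := by ring_nf; rw [hα2]; ring
      rcases mul_eq_zero.mp this with h1 | h1
      · exact hα1 (by linear_combination h1)
      · have hαm1 : α = -1 := by linear_combination h1
        have : β = -2 := by
          rw [hβ, hαm1]; norm_num
        rw [this] at hfβ
        apply hneg2
        apply hφinj
        rw [map_zero, ← hfβ, Polynomial.eval_map]
        have : ((-2 : K)) = φ (-2) := by rw [map_neg, hφ2]
        rw [this, Polynomial.eval₂_at_apply]
    -- W(α) ≠ 0
    have hdw' : w.natDegree < m - 1 + 1 := by omega
    have hWα : (Hpoly (m - 1) w).eval α ≠ 0 := by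
      rw [Hpoly_eval (m - 1) w hdw' α hα0, ← hβ]
      exact mul_ne_zero (pow_ne_zero _ hα0) hwβ
    have hW0 : Hpoly (m - 1) w ≠ 0 := by
      intro hz; rw [hz, eval_zero] at hWα; exact hWα rfl
    rw [hfacK, hquadK]
    rw [rootMultiplicity_mul (mul_ne_zero
      (mul_ne_zero (X_sub_C_ne_zero α) (X_sub_C_ne_zero α⁻¹)) hW0),
      rootMultiplicity_mul (mul_ne_zero (X_sub_C_ne_zero α) (X_sub_C_ne_zero α⁻¹)),
      rootMultiplicity_X_sub_C_self]
    have h1 : rootMultiplicity α (X - C α⁻¹) = 0 :=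
      rootMultiplicity_eq_zero (by simp [IsRoot, sub_eq_zero]; exact hαne)
    have h2' : rootMultiplicity α (Hpoly (m - 1) w) = 0 :=
      rootMultiplicity_eq_zero hWα
    omega
end

section
/- Let q be a prime power, let m ≥ 1, and let Φ = Σ_{i=0}^{2m} c_i x^{q^i} be a monic q-anti-palindromic q-polynomial of q-degree 2m in F_q[x], i.e. c_{2m} = 1, c_i = -c_{2m-i} for 0 ≤ i ≤ m, and c_m = 0. Then there exists a monic polynomial f of degree q^{m-1}(q^m + 1) in F_q[x] such that f^q - f = x^{q^m}·Φ. The polynomial f is unique subject to the condition f(0) = 0, and every power of x occurring in f with nonzero coefficient is of the form x^{q^i + q^j} for non-negative integers i and j. -/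
open Polynomial

/-- Let `Φ = ∑_{i≤2m} c_i X^{q^i}` be a monic `q`-anti-palindromic
`q`-polynomial of `q`-degree `2m` over `F_q` (so `c_{2m} = 1`, `c_i = -c_{2m-i}` for
`i ≤ m`, and `c_m = 0`).  Then there is a monic polynomial `f` of degree
`q^{m-1}(q^m + 1)` over `F_q` with `f^q - f = X^{q^m}·Φ`; it is unique subject to
`f(0) = 0`, and every power of `X` occurring in `f` with nonzero coefficient has the form
`X^{q^i + q^j}`. -/
theorem stmt_15 (Fq : Type*) [Field Fq] [Fintype Fq] (q : ℕ) (hq : Fintype.card Fq = q)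
    (m : ℕ) (hm : 1 ≤ m) (c : ℕ → Fq)
    (hc2m : c (2 * m) = 1) (hcap : ∀ i ≤ m, c i = - c (2 * m - i)) (hcm : c m = 0)
    (Φ : Polynomial Fq)
    (hΦ : Φ = ∑ i ∈ Finset.range (2 * m + 1), C (c i) * X ^ (q ^ i)) :
    (∃ f : Polynomial Fq, f.Monic ∧ f.natDegree = q ^ (m - 1) * (q ^ m + 1) ∧
      f.eval 0 = 0 ∧ f ^ q - f = X ^ (q ^ m) * Φ ∧
      ∀ n : ℕ, f.coeff n ≠ 0 → ∃ i j : ℕ, n = q ^ i + q ^ j) ∧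
    (∀ f₁ f₂ : Polynomial Fq, f₁.eval 0 = 0 → f₂.eval 0 = 0 →
      f₁ ^ q - f₁ = X ^ (q ^ m) * Φ → f₂ ^ q - f₂ = X ^ (q ^ m) * Φ → f₁ = f₂) := by
  have hq2 : 2 ≤ q := hq ▸ Fintype.one_lt_card
  obtain ⟨p, hchar⟩ := CharP.exists Fq
  haveI := hchar
  have hp : p.Prime := CharP.char_is_prime Fq p
  haveI : Fact p.Prime := ⟨hp⟩
  obtain ⟨n, hn⟩ := FiniteField.card Fq p
  have hqn : q = p ^ (n : ℕ) := hq ▸ hn.2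
  -- Frobenius facts
  have hsumpow : ∀ (s : Finset ℕ) (g : ℕ → Polynomial Fq),
      (∑ i ∈ s, g i) ^ q = ∑ i ∈ s, g i ^ q := by
    intro s g
    rw [hqn]
    have h := map_sum (iterateFrobenius (Polynomial Fq) p (n : ℕ)) g s
    simp only [iterateFrobenius_def] at h
    exact h
  have htermpow : ∀ (a : Fq) (e : ℕ), (C a * X ^ e : Polynomial Fq) ^ q = C a * X ^ (q * e) := by
    intro a e
    rw [mul_pow, ← C_pow, ← pow_mul, ← hq, FiniteField.pow_card, mul_comm e]
  -- the candidate f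
  set E := q ^ (m - 1) + q ^ (2 * m - 1) with hE
  have hDE : q ^ (m - 1) * (q ^ m + 1) = E := by
    have h1 : q ^ (m - 1) * (q ^ m + 1) = q ^ (m - 1) + q ^ (m - 1 + m) := by ring
    rw [h1, show m - 1 + m = 2 * m - 1 by omega]
  set f : Polynomial Fq := ∑ i ∈ Finset.range m, ∑ r ∈ Finset.range (m - i),
      C (c (2 * m - i)) * X ^ (q ^ (i + r) + q ^ (m + r)) with hf
  -- key functional equation
  have key : f ^ q - f = X ^ (q ^ m) * Φ := by
    have hfq : f ^ q = ∑ i ∈ Finset.range m, ∑ r ∈ Finset.range (m - i),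
        C (c (2 * m - i)) * X ^ (q ^ (i + (r + 1)) + q ^ (m + (r + 1))) := by
      rw [hf, hsumpow]
      refine Finset.sum_congr rfl fun i _ => ?_
      rw [hsumpow]
      refine Finset.sum_congr rfl fun r _ => ?_
      rw [htermpow]
      congr 1
      rw [mul_add, ← pow_succ', ← pow_succ', add_assoc i r 1, add_assoc m r 1]
    have htel : ∀ i ∈ Finset.range m,
        ((∑ r ∈ Finset.range (m - i),
            C (c (2 * m - i)) * X ^ (q ^ (i + (r + 1)) + q ^ (m + (r + 1)))) -
          ∑ r ∈ Finset.range (m - i), C (c (2 * m - i)) * X ^ (q ^ (i + r) + q ^ (m + r)))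
        = C (c (2 * m - i)) * X ^ (q ^ m + q ^ (2 * m - i))
            - C (c (2 * m - i)) * X ^ (q ^ i + q ^ m) := by
      intro i hi
      rw [Finset.mem_range] at hi
      rw [← Finset.sum_sub_distrib]
      have ht := Finset.sum_range_sub
        (fun r => C (c (2 * m - i)) * X ^ (q ^ (i + r) + q ^ (m + r))) (m - i)
      rw [ht, show i + (m - i) = m by omega, show m + (m - i) = 2 * m - i by omega,
        show i + 0 = i by omega, show m + 0 = m by omega]
    have hrhs : X ^ (q ^ m) * Φ
        = ∑ i ∈ Finset.range (2 * m + 1), C (c i) * X ^ (q ^ m + q ^ i) := by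
      rw [hΦ, Finset.mul_sum]
      refine Finset.sum_congr rfl fun i _ => ?_
      rw [pow_add]; ring
    have hsplit : ∑ i ∈ Finset.range (2 * m + 1), C (c i) * X ^ (q ^ m + q ^ i)
        = ∑ i ∈ Finset.range m, (C (c i) * X ^ (q ^ m + q ^ i)
            + C (c (2 * m - i)) * X ^ (q ^ m + q ^ (2 * m - i))) := by
      have h2m : 2 * m + 1 = m + (m + 1) := by omega
      rw [h2m, Finset.sum_range_add, Finset.sum_range_succ', Nat.add_zero, hcm, map_zero,
        zero_mul, add_zero,
        ← Finset.sum_range_reflect (fun j => C (c (m + (j + 1))) * X ^ (q ^ m + q ^ (m + (j + 1)))) m,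
        ← Finset.sum_add_distrib]
      refine Finset.sum_congr rfl fun j hj => ?_
      rw [Finset.mem_range] at hj
      rw [show m + (m - 1 - j + 1) = 2 * m - j by omega]
    rw [hfq, hf, ← Finset.sum_sub_distrib, Finset.sum_congr rfl htel, hrhs, hsplit]
    refine Finset.sum_congr rfl fun i hi => ?_
    rw [Finset.mem_range] at hi
    rw [hcap i (by omega), map_neg, add_comm (q ^ i) (q ^ m)]
    ring
  -- coefficient computations
  have hexp_lt : ∀ i r : ℕ, i < m → r < m - i → r ≠ m - 1 →
      q ^ (i + r) + q ^ (m + r) < E := by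
    intro i r hi hr hrm
    have h1 : q ^ (i + r) ≤ q ^ (m - 1) := Nat.pow_le_pow_right (by omega) (by omega)
    have h2 : q ^ (m + r) < q ^ (2 * m - 1) := Nat.pow_lt_pow_right (by omega) (by omega)
    omega
  have hcoeffE : f.coeff E = 1 := by
    rw [hf]
    simp only [finset_sum_coeff, coeff_C_mul, coeff_X_pow]
    rw [Finset.sum_eq_single_of_mem 0 (Finset.mem_range.2 (by omega))]
    · rw [Finset.sum_eq_single_of_mem (m - 1)
        (Finset.mem_range.2 (by omega))]
      · rw [if_pos, show 2 * m - 0 = 2 * m by omega, hc2m, mul_one]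
        rw [show 0 + (m - 1) = m - 1 by omega, show m + (m - 1) = 2 * m - 1 by omega]
      · intro r hr hrneq
        rw [Finset.mem_range] at hr
        rw [if_neg, mul_zero]
        intro h
        exact absurd h.symm (Nat.ne_of_lt (hexp_lt 0 r (by omega) (by omega) hrneq))
    · intro i hi hineq
      rw [Finset.mem_range] at hi
      refine Finset.sum_eq_zero fun r hr => ?_
      rw [Finset.mem_range] at hr
      rw [if_neg, mul_zero]
      intro h
      exact absurd h.symm (Nat.ne_of_lt (hexp_lt i r hi hr (by omega)))
  have hdegle : f.natDegree ≤ E := by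
    rw [hf]
    refine natDegree_sum_le_of_forall_le _ _ fun i hi => ?_
    refine natDegree_sum_le_of_forall_le _ _ fun r hr => ?_
    rw [Finset.mem_range] at hi hr
    refine (natDegree_C_mul_le _ _).trans ?_
    rw [natDegree_X_pow]
    have h1 : q ^ (i + r) ≤ q ^ (m - 1) := Nat.pow_le_pow_right (by omega) (by omega)
    have h2 : q ^ (m + r) ≤ q ^ (2 * m - 1) := Nat.pow_le_pow_right (by omega) (by omega)
    omega
  have hdeg : f.natDegree = E :=
    le_antisymm hdegle (le_natDegree_of_ne_zero (by rw [hcoeffE]; exact one_ne_zero))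
  have hmonic : f.Monic := by
    rw [Monic, leadingCoeff, hdeg, hcoeffE]
  have heval : f.eval 0 = 0 := by
    rw [← coeff_zero_eq_eval_zero, hf]
    simp only [finset_sum_coeff, coeff_C_mul, coeff_X_pow]
    refine Finset.sum_eq_zero fun i _ => Finset.sum_eq_zero fun r _ => ?_
    rw [if_neg, mul_zero]
    have : 0 < q ^ (i + r) := Nat.pow_pos (by omega)
    omega
  have hshape : ∀ nn : ℕ, f.coeff nn ≠ 0 → ∃ i j : ℕ, nn = q ^ i + q ^ j := by
    intro nn hnn
    by_contra hno
    push_neg at hno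
    apply hnn
    rw [hf]
    simp only [finset_sum_coeff, coeff_C_mul, coeff_X_pow]
    refine Finset.sum_eq_zero fun i _ => Finset.sum_eq_zero fun r _ => ?_
    rw [if_neg (hno (i + r) (m + r)), mul_zero]
  refine ⟨⟨f, hmonic, by rw [hdeg, hDE], heval, key, hshape⟩, ?_⟩
  -- uniqueness
  intro f₁ f₂ h₁0 h₂0 h₁ h₂
  have hsub : (f₁ - f₂) ^ q = f₁ - f₂ := by
    rw [hqn, sub_pow_char_pow, ← hqn]
    have := h₁.trans h₂.symm
    linear_combination this
  have hd0 : (f₁ - f₂).natDegree = 0 := by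
    have h := congrArg natDegree hsub
    rw [natDegree_pow] at h
    have h2 : 2 * (f₁ - f₂).natDegree ≤ q * (f₁ - f₂).natDegree :=
      Nat.mul_le_mul_right _ hq2
    omega
  have hC := Polynomial.eq_C_of_natDegree_eq_zero hd0
  have hc0 : (f₁ - f₂).coeff 0 = 0 := by
    rw [coeff_zero_eq_eval_zero, eval_sub, h₁0, h₂0, sub_zero]
  rw [hc0, map_zero] at hC
  exact sub_eq_zero.mp hC
end

section
/- Let q be a prime power, let m ≥ 2, and let Φ be a monic q-anti-palindromic q-polynomial of q-degree 2m in F_q[x]. Let f be the unique monic polynomial of degree q^{m-1}(q^m+1) in F_q[x] with f(0) = 0 and f^q - f = x^{q^m}·Φ. Define L(x) = Φ(x) + t^q·x^{q^{m+1}} - t·x^{q^{m-1}} in F_q(t)[x]. Then x^{q^m}·L(x) = ∏_{λ ∈ F_q} (t·x^{q^m + q^{m-1}} + f(x) + λ), and L(x)/x has exactly q distinct irreducible factors over F_q(t): one irreducible factor of degree (q^{m-1} - 1)(q^m + 1) and q - 1 irreducible factors each of degree q^{m-1}(q^m + 1). -/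
open Polynomial

-- degree-one primitive polynomials are irreducible
lemma aux_irreducible_of_natDegree_one {R : Type*} [CommRing R] [IsDomain R] {p : R[X]}
    (hd : p.natDegree = 1) (hp : p.IsPrimitive) : Irreducible p := by
  have hp0 : p ≠ 0 := fun h => by simp [h] at hd
  refine ⟨fun hu => by simp [natDegree_eq_zero_of_isUnit hu] at hd, fun a b hab => ?_⟩
  have ha0 : a ≠ 0 := fun h => hp0 (by simp [hab, h])
  have hb0 : b ≠ 0 := fun h => hp0 (by simp [hab, h])
  have hdeg : a.natDegree + b.natDegree = 1 := by
    rw [← natDegree_mul ha0 hb0, ← hab, hd]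
  rcases (by omega : a.natDegree = 0 ∨ b.natDegree = 0) with h | h
  · left
    have ha : a = C (a.coeff 0) := eq_C_of_natDegree_eq_zero h
    have : C (a.coeff 0) ∣ p := ⟨b, by rw [← ha, hab]⟩
    rw [ha, isUnit_C]
    exact hp _ this
  · right
    have hb : b = C (b.coeff 0) := eq_C_of_natDegree_eq_zero h
    have : C (b.coeff 0) ∣ p := ⟨a, by rw [← hb, hab, mul_comm]⟩
    rw [hb, isUnit_C]
    exact hp _ this

-- the swap homomorphism on R[t][x]
noncomputable def swapHom (R : Type*) [CommSemiring R] :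
    Polynomial (Polynomial R) →+* Polynomial (Polynomial R) :=
  eval₂RingHom (eval₂RingHom (Polynomial.C.comp Polynomial.C) X) (C X)

lemma swapHom_X (R : Type*) [CommSemiring R] : swapHom R X = C X := by
  simp [swapHom]

lemma swapHom_C (R : Type*) [CommSemiring R] (p : Polynomial R) :
    swapHom R (C p) = eval₂ (Polynomial.C.comp Polynomial.C) X p := by
  simp [swapHom, eval₂_C]

lemma swapHom_C_X (R : Type*) [CommSemiring R] : swapHom R (C X) = X := by
  rw [swapHom_C, eval₂_X]

lemma swapHom_comp_swapHom (R : Type*) [CommSemiring R] :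
    (swapHom R).comp (swapHom R) = RingHom.id _ := by
  apply Polynomial.ringHom_ext'
  · apply Polynomial.ringHom_ext
    · intro a
      simp [swapHom_C, eval₂_C]
    · simp [swapHom_C_X, swapHom_X]
  · simp [swapHom_X, swapHom_C_X]

lemma swapHom_swapHom {R : Type*} [CommSemiring R] (x : Polynomial (Polynomial R)) :
    swapHom R (swapHom R x) = x := by
  have := RingHom.congr_fun (swapHom_comp_swapHom R) x
  simpa using this

noncomputable def swapEquiv (R : Type*) [CommSemiring R] :
    Polynomial (Polynomial R) ≃+* Polynomial (Polynomial R) :=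
  RingEquiv.ofRingHom (swapHom R) (swapHom R) (swapHom_comp_swapHom R) (swapHom_comp_swapHom R)

lemma swapEquiv_apply {R : Type*} [CommSemiring R] (x : Polynomial (Polynomial R)) :
    swapEquiv R x = swapHom R x := rfl

lemma swapHom_map_C (R : Type*) [CommSemiring R] (p : Polynomial R) :
    swapHom R (p.map Polynomial.C) = C p := by
  have : (swapHom R).comp (mapRingHom Polynomial.C) = (C : Polynomial R →+* _) := by
    apply Polynomial.ringHom_ext
    · intro a
      simp [swapHom_C, eval₂_C]
    · simp [swapHom_X]
  have := RingHom.congr_fun this p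
  simpa using this

lemma aux_prod_id {Fq : Type*} [Field Fq] [Fintype Fq] {A : Type*} [CommRing A]
    [IsDomain A] [Algebra Fq A] (W : A) :
    ∏ lam : Fq, (W + algebraMap Fq A lam) = W ^ (Fintype.card Fq) - W := by
  have hm : ((X : Polynomial Fq) ^ Fintype.card Fq - X).Monic := by
    apply (monic_X_pow _).sub_of_left
    rw [degree_X_pow, degree_X]
    exact_mod_cast Fintype.one_lt_card
  have hr := FiniteField.roots_X_pow_card_sub_X Fq
  have hcard : ((X : Polynomial Fq) ^ Fintype.card Fq - X).roots.card
      = ((X : Polynomial Fq) ^ Fintype.card Fq - X).natDegree := by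
    rw [hr, FiniteField.X_pow_card_sub_X_natDegree_eq Fq Fintype.one_lt_card]
    simp [Finset.card_univ]
  have base := prod_multiset_X_sub_C_of_monic_of_roots_card_eq hm hcard
  rw [hr] at base
  have base' : (∏ a : Fq, (X - C a) : Polynomial Fq) = X ^ Fintype.card Fq - X := by
    rw [Finset.prod_eq_multiset_prod]
    exact base
  have h2 := congrArg (aeval W) base'
  simp only [map_prod, map_sub, map_pow, aeval_X, aeval_C] at h2
  rw [← h2, ← Equiv.prod_comp (Equiv.neg Fq) (fun a => W - algebraMap Fq A a)]
  apply Finset.prod_congr rfl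
  intro a _
  simp [sub_neg_eq_add]

lemma aux_irred {Fq : Type*} [Field Fq] (e : ℕ) (he : 1 ≤ e) (b : Polynomial Fq)
    (hb0 : b.coeff 0 ≠ 0) (hbm : b.Monic) (hdeg : e < b.natDegree) :
    (Polynomial.C RatFunc.X * X ^ e + b.map (algebraMap Fq (RatFunc Fq))).Monic ∧
    Irreducible (Polynomial.C RatFunc.X * X ^ e + b.map (algebraMap Fq (RatFunc Fq))) ∧
    (Polynomial.C RatFunc.X * X ^ e + b.map (algebraMap Fq (RatFunc Fq))).natDegree
      = b.natDegree := by
  set H : Polynomial (Polynomial Fq) :=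
    C Polynomial.X * X ^ e + b.map Polynomial.C with hH
  have hbmap : (b.map (Polynomial.C : Fq →+* Polynomial Fq)).Monic := hbm.map _
  have hdlt : (C Polynomial.X * X ^ e : Polynomial (Polynomial Fq)).degree
      < (b.map (Polynomial.C : Fq →+* Polynomial Fq)).degree := by
    refine lt_of_le_of_lt (degree_C_mul_X_pow_le _ _) ?_
    rw [hbm.degree_map, degree_eq_natDegree hbm.ne_zero]
    exact_mod_cast hdeg
  have hHm : H.Monic := by
    have := hbmap.add_of_left hdlt
    rwa [add_comm] at this
  have hHdeg : H.natDegree = b.natDegree := by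
    rw [hH, add_comm, natDegree_add_eq_left_of_degree_lt hdlt, hbm.natDegree_map]
  -- irreducibility over Fq[t]
  have hXb : IsCoprime (X : Polynomial Fq) b := by
    refine ⟨-(C (b.coeff 0)⁻¹ * b.divX), C (b.coeff 0)⁻¹, ?_⟩
    have h := X_mul_divX_add b
    have hc : C (b.coeff 0)⁻¹ * C (b.coeff 0) = (1 : Polynomial Fq) := by
      rw [← C_mul, inv_mul_cancel₀ hb0, C_1]
    linear_combination (-(C (b.coeff 0)⁻¹)) * h + hc
  have hcop : IsCoprime ((X : Polynomial Fq) ^ e) b := hXb.pow_left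
  have hσ : swapEquiv Fq H = C (X ^ e) * X + C b := by
    rw [swapEquiv_apply, hH]
    rw [map_add, map_mul, map_pow, swapHom_map_C]
    rw [swapHom_X]
    have : swapHom Fq (C Polynomial.X) = X := swapHom_C_X Fq
    rw [this, ← C_pow, mul_comm (X : Polynomial (Polynomial Fq)) _]
  have hXe0 : ((X : Polynomial Fq) ^ e) ≠ 0 := pow_ne_zero _ X_ne_zero
  have hdeg1 : (C ((X : Polynomial Fq) ^ e) * X + C b).natDegree = 1 :=
    natDegree_linear hXe0
  have hprim : (C ((X : Polynomial Fq) ^ e) * X + C b).IsPrimitive := by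
    intro r hr
    rw [C_dvd_iff_dvd_coeff] at hr
    have e1 : (C ((X : Polynomial Fq) ^ e) * X + C b).coeff 1 = X ^ e := by
      rw [coeff_add, coeff_C_mul, coeff_X_one, mul_one, coeff_C]
      simp
    have e0 : (C ((X : Polynomial Fq) ^ e) * X + C b).coeff 0 = b := by
      rw [coeff_add, coeff_C_mul, coeff_X_zero, mul_zero, coeff_C]
      simp
    have h1 := hr 1
    have h0 := hr 0
    rw [e1] at h1
    rw [e0] at h0
    exact hcop.isUnit_of_dvd' h1 h0
  have hirrswap : Irreducible (C ((X : Polynomial Fq) ^ e) * X + C b) :=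
    aux_irreducible_of_natDegree_one hdeg1 hprim
  have hirrH : Irreducible H := by
    rw [← MulEquiv.irreducible_iff (swapEquiv Fq)]
    rw [hσ]
    exact hirrswap
  -- pass to RatFunc
  have hmapeq : H.map (algebraMap (Polynomial Fq) (RatFunc Fq))
      = Polynomial.C RatFunc.X * X ^ e + b.map (algebraMap Fq (RatFunc Fq)) := by
    have hcomp : (algebraMap (Polynomial Fq) (RatFunc Fq)).comp
        (Polynomial.C : Fq →+* Polynomial Fq) = algebraMap Fq (RatFunc Fq) := by
      rw [← Polynomial.algebraMap_eq, ← IsScalarTower.algebraMap_eq]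
    rw [hH, Polynomial.map_add, Polynomial.map_mul, Polynomial.map_pow, Polynomial.map_X,
      Polynomial.map_C, RatFunc.algebraMap_X, Polynomial.map_map, hcomp]
  have hirr := (hHm.irreducible_iff_irreducible_map_fraction_map (K := RatFunc Fq)).mp hirrH
  rw [hmapeq] at hirr
  have hmm : (Polynomial.C RatFunc.X * X ^ e + b.map (algebraMap Fq (RatFunc Fq))).Monic := by
    rw [← hmapeq]; exact hHm.map _
  refine ⟨hmm, hirr, ?_⟩
  rw [← hmapeq, hHm.natDegree_map, hHdeg]

/-- Let `Φ` be a monic `q`-anti-palindromic `q`-polynomial of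
`q`-degree `2m` (`m ≥ 2`) over `F_q`, and let `f` be the unique monic polynomial of degree
`q^{m-1}(q^m+1)` with `f(0) = 0` and `f^q - f = X^{q^m}·Φ`.  Let
`L = Φ + t^q·X^{q^{m+1}} - t·X^{q^{m-1}}` over `F_q(t)`.  Then
`X^{q^m}·L = ∏_{λ ∈ F_q} (t·X^{q^m+q^{m-1}} + f + λ)`, and `L/X` has exactly `q` distinct
irreducible factors over `F_q(t)`: one of degree `(q^{m-1}-1)(q^m+1)` and `q - 1` of
degree `q^{m-1}(q^m+1)`. -/
theorem stmt_16 (Fq : Type*) [Field Fq] [Fintype Fq] (q : ℕ) (hq : Fintype.card Fq = q)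
    (m : ℕ) (hm : 2 ≤ m) (c : ℕ → Fq)
    (hc2m : c (2 * m) = 1) (hcap : ∀ i ≤ m, c i = - c (2 * m - i)) (hcm : c m = 0)
    (Φ : Polynomial Fq)
    (hΦ : Φ = ∑ i ∈ Finset.range (2 * m + 1), C (c i) * X ^ (q ^ i))
    (f : Polynomial Fq) (hfmonic : f.Monic)
    (hfdeg : f.natDegree = q ^ (m - 1) * (q ^ m + 1)) (hf0 : f.eval 0 = 0)
    (hf : f ^ q - f = X ^ (q ^ m) * Φ)
    (L : Polynomial (RatFunc Fq))
    (hL : L = Φ.map (algebraMap Fq (RatFunc Fq))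
      + Polynomial.C (RatFunc.X ^ q) * X ^ (q ^ (m + 1))
      - Polynomial.C RatFunc.X * X ^ (q ^ (m - 1))) :
    X ^ (q ^ m) * L = ∏ lam : Fq,
      (Polynomial.C RatFunc.X * X ^ (q ^ m + q ^ (m - 1))
        + f.map (algebraMap Fq (RatFunc Fq))
        + Polynomial.C (algebraMap Fq (RatFunc Fq) lam)) ∧
    ∃ S : Finset (Polynomial (RatFunc Fq)),
      S.card = q ∧ (∀ g ∈ S, g.Monic ∧ Irreducible g) ∧
      L = X * ∏ g ∈ S, g ∧
      (S.filter fun g => g.natDegree = (q ^ (m - 1) - 1) * (q ^ m + 1)).card = 1 ∧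
      (S.filter fun g => g.natDegree = q ^ (m - 1) * (q ^ m + 1)).card = q - 1 := by
  have hq2 : 2 ≤ q := by rw [← hq]; exact Fintype.one_lt_card
  have hq0 : 0 < q := by omega
  have hqm1 : 2 ≤ q ^ (m - 1) := by
    calc 2 ≤ q := hq2
    _ = q ^ 1 := (pow_one q).symm
    _ ≤ q ^ (m - 1) := Nat.pow_le_pow_right (by omega) (by omega)
  -- coefficient facts about f
  have hexp : expand Fq q f - f = X ^ q ^ m * Φ := by
    rw [← hf]
    congr 1
    have := FiniteField.expand_card f
    rwa [hq] at this
  have hΦc : ∀ k, Φ.coeff k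
      = ∑ i ∈ Finset.range (2 * m + 1), if k = q ^ i then c i else 0 := by
    intro k
    rw [hΦ, finset_sum_coeff]
    apply Finset.sum_congr rfl
    intro i _
    rw [coeff_C_mul, coeff_X_pow, mul_ite, mul_one, mul_zero]
  have hΦ0 : Φ.coeff 0 = 0 := by
    rw [hΦc]
    apply Finset.sum_eq_zero
    intro i _
    have : q ^ i ≠ 0 := pow_ne_zero _ (by omega)
    simp [Ne.symm this]
  have hΦ1 : Φ.coeff 1 = c 0 := by
    rw [hΦc, Finset.sum_eq_single 0]
    · simp
    · intro i _ hne
      have h1 : 1 < q ^ i := Nat.one_lt_pow hne (by omega)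
      rw [if_neg (by omega)]
    · intro h
      exact absurd (Finset.mem_range.mpr (by omega)) h
  have hcoeff_eq : ∀ j, (if q ∣ j then f.coeff (j / q) else 0) - f.coeff j
      = if q ^ m ≤ j then Φ.coeff (j - q ^ m) else 0 := by
    intro j
    have h := congrArg (fun P : Polynomial Fq => P.coeff j) hexp
    simp only [coeff_sub] at h
    rw [coeff_expand hq0] at h
    rw [mul_comm, coeff_mul_X_pow'] at h
    exact h
  have hlow : ∀ j ≤ q ^ m, f.coeff j = 0 := by
    intro j
    induction j using Nat.strong_induction_on with
    | _ j ih =>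
      intro hj
      have h := hcoeff_eq j
      have hrhs : (if q ^ m ≤ j then Φ.coeff (j - q ^ m) else 0) = 0 := by
        rcases eq_or_lt_of_le hj with heq | hlt
        · rw [heq, if_pos le_rfl, Nat.sub_self, hΦ0]
        · rw [if_neg (by omega)]
      rw [hrhs] at h
      by_cases h0 : j = 0
      · rw [h0, coeff_zero_eq_eval_zero]
        exact hf0
      by_cases hdvd : q ∣ j
      · have hlt' : j / q < j := Nat.div_lt_self (by omega) (by omega)
        have hz : f.coeff (j / q) = 0 := ih _ hlt' (le_trans (Nat.div_le_self _ _) hj)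
        rw [if_pos hdvd, hz, zero_sub, neg_eq_zero] at h
        exact h
      · rw [if_neg hdvd, zero_sub, neg_eq_zero] at h
        exact h
  have hc1 : f.coeff (q ^ m + 1) = 1 := by
    have h := hcoeff_eq (q ^ m + 1)
    have hnd : ¬ q ∣ (q ^ m + 1) := by
      intro hd
      have h1 : q ∣ q ^ m := dvd_pow_self q (by omega)
      have h2 : q ∣ 1 := (Nat.dvd_add_right h1).mp hd
      have := Nat.le_of_dvd one_pos h2
      omega
    rw [if_neg hnd, if_pos (by omega), Nat.add_sub_cancel_left, hΦ1, zero_sub] at h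
    have hc0 : c 0 = -1 := by
      have := hcap 0 (by omega)
      rw [Nat.sub_zero, hc2m] at this
      exact this
    rw [hc0] at h
    have : f.coeff (q ^ m + 1) = 1 := by
      have := neg_injective h
      simpa using this
    exact this
  -- factor f = X^(q^m+1) * f₁
  have hXdvd : X ^ (q ^ m + 1) ∣ f := X_pow_dvd_iff.mpr (fun d hd => hlow d (by omega))
  obtain ⟨f₁, hf₁⟩ := hXdvd
  have hf₁monic : f₁.Monic := (monic_X_pow _).of_mul_monic_left (hf₁ ▸ hfmonic)
  have hf₁0 : f₁.coeff 0 = 1 := by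
    have h := coeff_X_pow_mul f₁ (q ^ m + 1) 0
    rw [zero_add, ← hf₁, hc1] at h
    exact h.symm
  have hfne : f ≠ 0 := hfmonic.ne_zero
  have hf₁ne : f₁ ≠ 0 := hf₁monic.ne_zero
  have hfdeg' : f.natDegree = (q ^ m + 1) + f₁.natDegree := by
    rw [hf₁, natDegree_mul (pow_ne_zero _ X_ne_zero) hf₁ne, natDegree_X_pow]
  have hf₁deg : f₁.natDegree = (q ^ (m - 1) - 1) * (q ^ m + 1) := by
    rw [hfdeg] at hfdeg'
    have hsub : (q ^ (m - 1) - 1) * (q ^ m + 1)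
        = q ^ (m - 1) * (q ^ m + 1) - 1 * (q ^ m + 1) := Nat.sub_mul _ _ _
    rw [one_mul] at hsub
    generalize hP : q ^ (m - 1) * (q ^ m + 1) = P at hfdeg' hsub
    generalize hQ : (q ^ (m - 1) - 1) * (q ^ m + 1) = Q at hsub
    omega
  -- degree comparison facts
  have hDlt : (q ^ (m - 1) - 1) * (q ^ m + 1) < q ^ (m - 1) * (q ^ m + 1) := by
    have h1 : 0 < q ^ m + 1 := by omega
    exact Nat.mul_lt_mul_of_lt_of_le (by omega) (le_refl _) h1
  have hedeg : q ^ m + q ^ (m - 1) < q ^ (m - 1) * (q ^ m + 1) := by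
    have h1 : q ^ m < q ^ (m - 1) * q ^ m :=
      (Nat.lt_mul_iff_one_lt_left (pow_pos (by omega) _)).mpr (by omega)
    calc q ^ m + q ^ (m - 1) < q ^ (m - 1) * q ^ m + q ^ (m - 1) := by omega
    _ = q ^ (m - 1) * (q ^ m + 1) := by ring
  have he2 : 1 ≤ q ^ (m - 1) - 1 := by omega
  have hf₁edeg : q ^ (m - 1) - 1 < f₁.natDegree := by
    rw [hf₁deg]
    calc q ^ (m - 1) - 1 < (q ^ (m - 1) - 1) * 2 := by omega
    _ ≤ (q ^ (m - 1) - 1) * (q ^ m + 1) := Nat.mul_le_mul_left _ (by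
        have : 1 ≤ q ^ m := pow_pos (by omega) _
        omega)
  -- characteristic setup
  obtain ⟨p, hp⟩ := CharP.exists Fq
  obtain ⟨n, hpn, hcard⟩ := FiniteField.card Fq p
  haveI : Fact p.Prime := ⟨hpn⟩
  haveI : CharP (RatFunc Fq) p :=
    charP_of_injective_algebraMap (algebraMap Fq (RatFunc Fq)).injective p
  have hqpn : q = p ^ (n : ℕ) := by rw [← hq, hcard]
  have frob : ∀ x y : Polynomial (RatFunc Fq), (x + y) ^ q = x ^ q + y ^ q := by
    intro x y
    rw [hqpn]
    exact add_pow_char_pow x y p n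
  -- Part 1
  have hfq : f ^ q = X ^ q ^ m * Φ + f := by rw [← hf]; ring
  have hee : (q ^ m + q ^ (m - 1)) * q = q ^ (m + 1) + q ^ m := by
    rw [add_mul, ← pow_succ, ← pow_succ]
    congr 2
    omega
  have hWq : (Polynomial.C RatFunc.X * X ^ (q ^ m + q ^ (m - 1))
        + f.map (algebraMap Fq (RatFunc Fq))) ^ q
      = Polynomial.C (RatFunc.X ^ q) * X ^ (q ^ (m + 1) + q ^ m)
        + (X ^ q ^ m * Φ.map (algebraMap Fq (RatFunc Fq))
          + f.map (algebraMap Fq (RatFunc Fq))) := by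
    rw [frob, mul_pow, ← C_pow, ← pow_mul, hee, ← Polynomial.map_pow, hfq]
    rw [Polynomial.map_add, Polynomial.map_mul, Polynomial.map_pow, Polynomial.map_X]
  have hpart1 : X ^ q ^ m * L = ∏ lam : Fq,
      (Polynomial.C RatFunc.X * X ^ (q ^ m + q ^ (m - 1))
        + f.map (algebraMap Fq (RatFunc Fq))
        + Polynomial.C (algebraMap Fq (RatFunc Fq) lam)) := by
    have hpid := aux_prod_id (Fq := Fq) (A := Polynomial (RatFunc Fq))
      (Polynomial.C RatFunc.X * X ^ (q ^ m + q ^ (m - 1))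
        + f.map (algebraMap Fq (RatFunc Fq)))
    rw [hq] at hpid
    have hpe : ∏ lam : Fq,
        (Polynomial.C RatFunc.X * X ^ (q ^ m + q ^ (m - 1))
          + f.map (algebraMap Fq (RatFunc Fq))
          + Polynomial.C (algebraMap Fq (RatFunc Fq) lam))
        = ∏ lam : Fq,
        (Polynomial.C RatFunc.X * X ^ (q ^ m + q ^ (m - 1))
          + f.map (algebraMap Fq (RatFunc Fq))
          + algebraMap Fq (Polynomial (RatFunc Fq)) lam) := by
      apply Finset.prod_congr rfl
      intro lam _
      rw [Polynomial.algebraMap_apply]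
    rw [hpe, hpid, hWq, hL]
    rw [pow_add (X : Polynomial (RatFunc Fq)) (q ^ (m + 1)) (q ^ m),
      pow_add (X : Polynomial (RatFunc Fq)) (q ^ m) (q ^ (m - 1))]
    ring
  refine ⟨hpart1, ?_⟩
  classical
  -- the factors
  have hfdegpos : 0 < f.natDegree := by
    have : 0 < q ^ (m - 1) * (q ^ m + 1) := Nat.mul_pos (by omega) (by omega)
    omega
  have hU := aux_irred (q ^ (m - 1) - 1) he2 f₁ (by rw [hf₁0]; exact one_ne_zero)
    hf₁monic hf₁edeg
  have hHlam : ∀ lam : Fq, lam ≠ 0 →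
      (Polynomial.C RatFunc.X * X ^ (q ^ m + q ^ (m - 1))
        + (f + Polynomial.C lam).map (algebraMap Fq (RatFunc Fq))).Monic ∧
      Irreducible (Polynomial.C RatFunc.X * X ^ (q ^ m + q ^ (m - 1))
        + (f + Polynomial.C lam).map (algebraMap Fq (RatFunc Fq))) ∧
      (Polynomial.C RatFunc.X * X ^ (q ^ m + q ^ (m - 1))
        + (f + Polynomial.C lam).map (algebraMap Fq (RatFunc Fq))).natDegree
        = (f + Polynomial.C lam).natDegree := by
    intro lam hlam
    apply aux_irred
    · have : 1 ≤ q ^ m := pow_pos (a := q) (by omega) _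
      omega
    · rw [coeff_add, hlow 0 (Nat.zero_le _), coeff_C, zero_add]
      simpa using hlam
    · exact hfmonic.add_of_left (lt_of_le_of_lt degree_C_le
        (by rw [degree_eq_natDegree hfne]; exact_mod_cast hfdegpos))
    · rw [natDegree_add_C, hfdeg]
      exact hedeg
  have hfacmap : ∀ lam : Fq,
      Polynomial.C RatFunc.X * X ^ (q ^ m + q ^ (m - 1))
        + f.map (algebraMap Fq (RatFunc Fq))
        + Polynomial.C (algebraMap Fq (RatFunc Fq) lam)
      = Polynomial.C RatFunc.X * X ^ (q ^ m + q ^ (m - 1))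
        + (f + Polynomial.C lam).map (algebraMap Fq (RatFunc Fq)) := by
    intro lam
    rw [Polynomial.map_add, Polynomial.map_C, add_assoc]
  have hfac0 : Polynomial.C RatFunc.X * X ^ (q ^ m + q ^ (m - 1))
        + f.map (algebraMap Fq (RatFunc Fq))
        + Polynomial.C (algebraMap Fq (RatFunc Fq) 0)
      = X ^ (q ^ m + 1) * (Polynomial.C RatFunc.X * X ^ (q ^ (m - 1) - 1)
        + f₁.map (algebraMap Fq (RatFunc Fq))) := by
    rw [map_zero, Polynomial.C_0, add_zero]
    rw [hf₁, Polynomial.map_mul, Polynomial.map_pow, Polynomial.map_X]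
    rw [show q ^ m + q ^ (m - 1) = (q ^ m + 1) + (q ^ (m - 1) - 1) from by omega, pow_add]
    ring
  have hL2 : X ^ q ^ m * L = X ^ q ^ m * (X *
      ((Polynomial.C RatFunc.X * X ^ (q ^ (m - 1) - 1)
          + f₁.map (algebraMap Fq (RatFunc Fq)))
        * ∏ lam ∈ Finset.univ.erase (0 : Fq),
          (Polynomial.C RatFunc.X * X ^ (q ^ m + q ^ (m - 1))
            + f.map (algebraMap Fq (RatFunc Fq))
            + Polynomial.C (algebraMap Fq (RatFunc Fq) lam)))) := by
    rw [hpart1, ← Finset.mul_prod_erase Finset.univ _ (Finset.mem_univ (0 : Fq)), hfac0,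
      pow_succ]
    ring
  have hLfac : L = X *
      ((Polynomial.C RatFunc.X * X ^ (q ^ (m - 1) - 1)
          + f₁.map (algebraMap Fq (RatFunc Fq)))
        * ∏ lam ∈ Finset.univ.erase (0 : Fq),
          (Polynomial.C RatFunc.X * X ^ (q ^ m + q ^ (m - 1))
            + f.map (algebraMap Fq (RatFunc Fq))
            + Polynomial.C (algebraMap Fq (RatFunc Fq) lam))) :=
    mul_left_cancel₀ (pow_ne_zero _ X_ne_zero) hL2
  -- assemble the finset of irreducible factors
  set U : Polynomial (RatFunc Fq) := Polynomial.C RatFunc.X * X ^ (q ^ (m - 1) - 1)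
    + f₁.map (algebraMap Fq (RatFunc Fq)) with hUdef
  set HH : Fq → Polynomial (RatFunc Fq) := fun lam =>
    Polynomial.C RatFunc.X * X ^ (q ^ m + q ^ (m - 1))
      + f.map (algebraMap Fq (RatFunc Fq))
      + Polynomial.C (algebraMap Fq (RatFunc Fq) lam) with hHHdef
  have hUdeg : U.natDegree = (q ^ (m - 1) - 1) * (q ^ m + 1) := by
    rw [hU.2.2, hf₁deg]
  have hHdeg : ∀ lam : Fq, lam ≠ 0 →
      (HH lam).natDegree = q ^ (m - 1) * (q ^ m + 1) := by
    intro lam hlam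
    rw [hHHdef]
    simp only []
    rw [hfacmap lam, (hHlam lam hlam).2.2, natDegree_add_C, hfdeg]
  have hinj : ∀ a ∈ Finset.univ.erase (0 : Fq), ∀ b ∈ Finset.univ.erase (0 : Fq),
      HH a = HH b → a = b := by
    intro a _ b _ hab
    rw [hHHdef] at hab
    simp only [] at hab
    have h1 := add_left_cancel hab
    exact (algebraMap Fq (RatFunc Fq)).injective (C_inj.mp h1)
  have hUnot : U ∉ (Finset.univ.erase (0 : Fq)).image HH := by
    intro hmem
    obtain ⟨lam, hlam, heq⟩ := Finset.mem_image.mp hmem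
    have h1 := hHdeg lam (Finset.ne_of_mem_erase hlam)
    rw [heq, hUdeg] at h1
    omega
  refine ⟨insert U ((Finset.univ.erase (0 : Fq)).image HH), ?_, ?_, ?_, ?_, ?_⟩
  · rw [Finset.card_insert_of_notMem hUnot,
      Finset.card_image_of_injOn (fun a ha b hb h => hinj a ha b hb h),
      Finset.card_erase_of_mem (Finset.mem_univ _), Finset.card_univ, hq]
    omega
  · intro g hg
    rcases Finset.mem_insert.mp hg with rfl | hg
    · exact ⟨hU.1, hU.2.1⟩
    · obtain ⟨lam, hlam, rfl⟩ := Finset.mem_image.mp hg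
      have hlam0 := Finset.ne_of_mem_erase hlam
      constructor
      · rw [hHHdef]; simp only []; rw [hfacmap lam]
        exact (hHlam lam hlam0).1
      · rw [hHHdef]; simp only []; rw [hfacmap lam]
        exact (hHlam lam hlam0).2.1
  · rw [Finset.prod_insert hUnot, Finset.prod_image hinj]
    exact hLfac
  · rw [Finset.filter_insert, if_pos hUdeg]
    have hempty : ((Finset.univ.erase (0 : Fq)).image HH).filter
        (fun g => g.natDegree = (q ^ (m - 1) - 1) * (q ^ m + 1)) = ∅ := by
      apply Finset.filter_eq_empty_iff.mpr
      intro g hg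
      obtain ⟨lam, hlam, rfl⟩ := Finset.mem_image.mp hg
      rw [hHdeg lam (Finset.ne_of_mem_erase hlam)]
      omega
    rw [hempty]
    simp
  · rw [Finset.filter_insert, if_neg (by rw [hUdeg]; omega)]
    rw [Finset.filter_true_of_mem (fun g hg => by
      obtain ⟨lam, hlam, rfl⟩ := Finset.mem_image.mp hg
      exact hHdeg lam (Finset.ne_of_mem_erase hlam))]
    rw [Finset.card_image_of_injOn (fun a ha b hb h => hinj a ha b hb h),
      Finset.card_erase_of_mem (Finset.mem_univ _), Finset.card_univ, hq]
end

section
/- Let q be a prime power, let m ≥ 2, and let Φ be a monic q-anti-palindromic q-polynomial of q-degree 2m in F_q[x] (in particular the coefficient of x^{q^m} in Φ is zero). Let f be the unique monic polynomial of degree q^{m-1}(q^m+1) in F_q[x] with f(0)=0 and f^q - f = x^{q^m}·Φ. Let L(x) = Φ(x) + t^q·x^{q^{m+1}} - t·x^{q^{m-1}} in F_q(t)[x], let E be a splitting field of L over F_q(t), let V be the F_q-space of roots of L in E, and let G = Gal(E/F_q(t)). Define Q : V → E by Q(α) = t·α^{q^m + q^{m-1}} + f(α). Then: (i) Q(α)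 lies in the subfield F_q of E for every α in V; (ii) Q(λα) = λ^2 Q(α) for all λ in F_q and α in V, and C(α,β) := Q(α+β) - Q(α) - Q(β) is a symmetric F_q-bilinear form on V with values in F_q (alternating when q is even); (iii) C is nondegenerate on V; and (iv) Q is G-invariant: Q(σ(α)) = Q(α) for all σ in G and α in V. In other words, Q is a nondegenerate G-invariant F_q-valued quadratic form on V. -/
/-!
Write `f` as the `q`-quadratic polynomial `F = ∑_{i<m} c_{2m-i} ∑_{j<m-i} X^{q^{i+j} + q^{m+j}}`:
by anti-palindromy `X^{q^m} Φ` telescopes into `F^q - F`, and a solution of `g^q - g = h` with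
`g(0) = 0` is unique since `(f - F)^q = f - F` forces `f - F` to be constant. So
`Q x = t x^{q^m} x^{q^{m-1}} + F(x)` is a sum of multiples of products `x^{q^i} x^{q^j}` of two
`F_q`-linear maps, hence a quadratic form over `F_q` on all of `E`.

On a root `α` of `L` one has `Q(α)^q - Q(α) = α^{q^m} L(α) = 0`, so `Q(α) ∈ F_q`; as `Q` has
coefficients in `F_q(t)`, it commutes with `Gal(E/F_q(t))`. For nondegeneracy, differentiating
`f^q - f = X^{q^m} Φ` gives `f' = X^{q^m}` (because `Φ' = c_0 = -1`), so `β ↦ C(α, β)` is a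
polynomial of degree `< q^{2m}` with derivative `α^{q^m}`; it vanishes on the `q^{2m}` distinct
roots of the separable `L`, hence is zero, and `α = 0`.
-/

open Polynomial

theorem Finset.sum_range_two_mul_add_one {M : Type*} [AddCommMonoid M] (g : ℕ → M) (m : ℕ) :
    ∑ k ∈ Finset.range (2 * m + 1), g k = g m + ∑ i ∈ Finset.range m, (g i + g (2 * m - i)) := by
  rw [show 2 * m + 1 = m + 1 + m by ring, Finset.sum_range_add, Finset.sum_range_succ,
    Finset.sum_add_distrib, ← Finset.sum_range_reflect (fun i => g (2 * m - i))]
  have : ∀ j ∈ Finset.range m, g (m + 1 + j) = g (2 * m - (m - 1 - j)) := fun j hj => by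
    rw [Finset.mem_range] at hj; congr 1; omega
  rw [Finset.sum_congr rfl this]
  abel

theorem Nat.pow_add_pow_pred_lt_pow_two_mul {q m : ℕ} (hq : 2 ≤ q) (hm : 1 ≤ m) :
    q ^ m + q ^ (m - 1) < q ^ (2 * m) ∧ q ^ (m - 1) * (q ^ m + 1) < q ^ (2 * m) := by
  obtain ⟨n, rfl⟩ := Nat.exists_eq_add_of_le' hm
  have ha : 1 ≤ q ^ n := Nat.one_le_pow _ _ (by omega)
  simp only [Nat.add_sub_cancel, show 2 * (n + 1) = n + 1 + (n + 1) by ring, pow_add, pow_one]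
  have haq : 2 ≤ q ^ n * q := by nlinarith
  constructor
  · nlinarith [Nat.mul_le_mul_left (q ^ n * q) haq]
  · nlinarith [Nat.mul_le_mul_left (q ^ n * q ^ n * q) hq, Nat.mul_le_mul ha ha]

section FiniteFieldAlgebra

variable {K : Type*} [Field K] [Fintype K]

local notation "q" => Fintype.card K

theorem frobeniusAlgHom_pow_apply (R : Type*) [CommRing R] [Algebra K R] (k : ℕ) (x : R) :
    (FiniteField.frobeniusAlgHom K R ^ k) x = x ^ q ^ k := by
  rw [AlgHom.coe_pow, FiniteField.coe_frobeniusAlgHom, pow_iterate]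

theorem add_pow_card_pow {R : Type*} [CommRing R] [Algebra K R] (k : ℕ) (x y : R) :
    (x + y) ^ q ^ k = x ^ q ^ k + y ^ q ^ k := by
  simp only [← frobeniusAlgHom_pow_apply, map_add]

theorem sub_pow_card_pow {R : Type*} [CommRing R] [Algebra K R] (k : ℕ) (x y : R) :
    (x - y) ^ q ^ k = x ^ q ^ k - y ^ q ^ k := by
  simp only [← frobeniusAlgHom_pow_apply, map_sub]

theorem natCast_card_eq_zero (R : Type*) [CommRing R] [Algebra K R] : (q : R) = 0 := by
  rw [← map_natCast (algebraMap K R), FiniteField.cast_card_eq_zero, map_zero]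

theorem two_eq_zero_of_even_card (R : Type*) [CommRing R] [Algebra K R] (hq : Even q) :
    (2 : R) = 0 := by
  have hK : ringChar K = 2 := FiniteField.even_card_iff_char_two.mpr (Nat.even_iff.mp hq)
  have : (2 : K) = 0 := by exact_mod_cast hK ▸ ringChar.Nat.cast_ringChar
  rw [← map_ofNat (algebraMap K R) 2, this, map_zero]

theorem derivative_X_pow_card_pow (R : Type*) [CommRing R] [Algebra K R] {k : ℕ} (hk : k ≠ 0) :
    derivative (X ^ q ^ k : R[X]) = 0 := by
  rw [derivative_X_pow, Nat.cast_pow, natCast_card_eq_zero, zero_pow hk, C_0, zero_mul]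

theorem mem_range_algebraMap_of_pow_card_eq_self {E : Type*} [Field E] [Algebra K E] {x : E}
    (hx : x ^ q = x) : x ∈ Set.range (algebraMap K E) := by
  classical
  have hsplits : (X ^ q - X : K[X]).Splits := by
    rw [splits_iff_card_roots, FiniteField.roots_X_pow_card_sub_X,
      FiniteField.X_pow_card_sub_X_natDegree_eq K Fintype.one_lt_card]
    rfl
  have hroot : x ∈ ((X ^ q - X : K[X]).map (algebraMap K E)).roots := by
    rw [mem_roots (map_ne_zero (FiniteField.X_pow_card_sub_X_ne_zero K Fintype.one_lt_card))]
    simp [hx]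
  rw [hsplits.roots_map, FiniteField.roots_X_pow_card_sub_X] at hroot
  obtain ⟨a, -, rfl⟩ := Multiset.mem_map.mp hroot
  exact ⟨a, rfl⟩

theorem eq_of_pow_card_sub_eq {f g : K[X]} (h : f ^ q - f = g ^ q - g)
    (h0 : f.eval 0 = g.eval 0) : f = g := by
  have hfix : (f - g) ^ q = f - g := by
    calc (f - g) ^ q = f ^ q - g ^ q := by simpa only [pow_one] using sub_pow_card_pow 1 f g
      _ = f - g := by linear_combination h
  have hdeg : (f - g).natDegree = 0 := by
    have := natDegree_pow (f - g) q
    rw [hfix] at this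
    nlinarith [Fintype.one_lt_card (α := K)]
  rw [← sub_eq_zero, eq_C_of_natDegree_eq_zero hdeg, coeff_zero_eq_eval_zero, eval_sub, h0,
    sub_self, C_0]

noncomputable def qPoly (c : ℕ → K) (n : ℕ) : K[X] :=
  ∑ i ∈ Finset.range (n + 1), C (c i) * X ^ (q ^ i)

theorem derivative_qPoly (c : ℕ → K) (n : ℕ) : derivative (qPoly c n) = C (c 0) := by
  rw [qPoly, Finset.sum_range_succ', map_add, map_sum]
  simp only [derivative_C_mul, derivative_X_pow_card_pow K (Nat.succ_ne_zero _), mul_zero,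
    Finset.sum_const_zero, pow_zero, pow_one, derivative_X, mul_one, zero_add]

theorem coeff_qPoly_card_pow (c : ℕ → K) {n k : ℕ} (hk : k ≤ n) :
    (qPoly c n).coeff (q ^ k) = c k := by
  simp only [qPoly, finsetSum_coeff, coeff_C_mul_X_pow,
    (Nat.pow_right_injective Fintype.one_lt_card).eq_iff]
  rw [Finset.sum_ite_eq, if_pos (Finset.mem_range.mpr (by omega))]

noncomputable def qQuadratic (c : ℕ → K) (m : ℕ) : K[X] :=
  ∑ i ∈ Finset.range m, C (c (2 * m - i)) *
    ∑ j ∈ Finset.range (m - i), X ^ (q ^ (i + j) + q ^ (m + j))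

theorem eval_zero_qQuadratic (c : ℕ → K) (m : ℕ) : (qQuadratic c m).eval 0 = 0 := by
  simp [qQuadratic, eval_finsetSum, Fintype.card_ne_zero]

theorem qQuadratic_pow_card_sub {c : ℕ → K} {m : ℕ} (hcap : ∀ i ≤ m, c i = -c (2 * m - i))
    (hcm : c m = 0) : qQuadratic c m ^ q - qQuadratic c m = X ^ q ^ m * qPoly c (2 * m) := by
  set g : ℕ → ℕ → K[X] := fun i j => X ^ (q ^ (i + j) + q ^ (m + j))
  have hfrob : qQuadratic c m ^ q =
      ∑ i ∈ Finset.range m, C (c (2 * m - i)) * ∑ j ∈ Finset.range (m - i), g i (j + 1) := by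
    simp only [qQuadratic, ← FiniteField.frobeniusAlgHom_apply, map_sum, map_mul]
    refine Finset.sum_congr rfl fun i _ => ?_
    rw [FiniteField.frobeniusAlgHom_apply, ← map_pow, FiniteField.pow_card]
    refine congrArg _ (Finset.sum_congr rfl fun j _ => ?_)
    rw [FiniteField.frobeniusAlgHom_apply, ← pow_mul]
    congr 1
    ring
  rw [hfrob, qQuadratic, ← Finset.sum_sub_distrib, qPoly, Finset.mul_sum,
    Finset.sum_range_two_mul_add_one, hcm, C_0, zero_mul, mul_zero, zero_add]
  refine Finset.sum_congr rfl fun i hi => ?_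
  have hi : i < m := Finset.mem_range.mp hi
  rw [← mul_sub, ← Finset.sum_sub_distrib, Finset.sum_range_sub, hcap i hi.le, C_neg]
  simp only [g, add_zero]
  rw [show i + (m - i) = m by omega, show m + (m - i) = 2 * m - i by omega]
  ring

section QuadraticMap

variable (A : Type*) [CommRing A] [Algebra K A]

variable (K) in
noncomputable def frobMul (i j : ℕ) : QuadraticMap K A A :=
  QuadraticMap.linMulLin (FiniteField.frobeniusAlgHom K A ^ i).toLinearMap
    (FiniteField.frobeniusAlgHom K A ^ j).toLinearMap

variable (K) in
theorem frobMul_apply (i j : ℕ) (x : A) : frobMul K A i j x = x ^ q ^ i * x ^ q ^ j := by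
  simp only [frobMul, QuadraticMap.linMulLin_apply, AlgHom.toLinearMap_apply,
    frobeniusAlgHom_pow_apply]

noncomputable def qQuadraticMap (t : A) (c : ℕ → K) (m : ℕ) : QuadraticMap K A A :=
  t • frobMul K A m (m - 1) +
    ∑ i ∈ Finset.range m, c (2 * m - i) • ∑ j ∈ Finset.range (m - i), frobMul K A (i + j) (m + j)

theorem qQuadraticMap_apply (t : A) (c : ℕ → K) (m : ℕ) (x : A) :
    qQuadraticMap A t c m x = t * x ^ (q ^ m + q ^ (m - 1)) + aeval x (qQuadratic c m) := by
  simp only [qQuadraticMap, qQuadratic, add_apply, sum_apply, smul_apply, smul_eq_mul,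
    frobMul_apply, map_sum, map_mul, aeval_C, map_pow, aeval_X, pow_add, Algebra.smul_def]

end QuadraticMap

theorem pow_card_eq_self_of_aeval_eq_zero {A : Type*} [CommRing A] [Algebra K A] {m : ℕ}
    (hm : m ≠ 0) {f Φ : K[X]} (hf : f ^ q - f = X ^ q ^ m * Φ) {t x : A}
    (hx : aeval x Φ + t ^ q * x ^ q ^ (m + 1) - t * x ^ q ^ (m - 1) = 0) :
    (t * x ^ (q ^ m + q ^ (m - 1)) + aeval x f) ^ q =
      t * x ^ (q ^ m + q ^ (m - 1)) + aeval x f := by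
  have hfx : aeval x f ^ q = aeval x f + x ^ q ^ m * aeval x Φ := by
    rw [← map_pow, show f ^ q = f + X ^ q ^ m * Φ by linear_combination hf, map_add, map_mul,
      map_pow, aeval_X]
  have hexp : (q ^ m + q ^ (m - 1)) * q = q ^ (m + 1) + q ^ m := by
    rw [add_mul, ← pow_succ, ← pow_succ, Nat.sub_add_cancel (Nat.one_le_iff_ne_zero.mpr hm)]
  rw [← pow_one q, add_pow_card_pow, pow_one, mul_pow, ← pow_mul, hexp, hfx, pow_add, pow_add]
  linear_combination x ^ q ^ m * hx

theorem derivative_eq_X_pow_of_pow_card_sub_eq {m : ℕ} (hm : m ≠ 0) {f Φ : K[X]}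
    (hf : f ^ q - f = X ^ q ^ m * Φ) (hΦ : derivative Φ = -1) : derivative f = X ^ q ^ m := by
  have h := congrArg derivative hf
  rw [map_sub, derivative_pow, natCast_card_eq_zero, C_0, zero_mul, zero_mul, zero_sub,
    derivative_mul, derivative_X_pow_card_pow K hm, zero_mul, zero_add, hΦ, mul_neg_one] at h
  exact neg_inj.mp h

variable (K) in
theorem eq_zero_of_forall_polar_eval_eq_zero {E : Type*} [Field E] [Algebra K E] {P : E[X]}
    {k : ℕ} (hP : derivative P = X ^ q ^ k) {S : Finset E} (hS : P.natDegree < S.card) {α : E}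
    (h : ∀ β ∈ S, QuadraticMap.polar (P.eval ·) α β = 0) : α = 0 := by
  set B := P.comp (X + C α) - P - C (P.eval α)
  have hB : B = 0 := by
    refine eq_zero_of_natDegree_lt_card_of_eval_eq_zero' B S (fun β hβ => ?_) ?_
    · simpa [B, QuadraticMap.polar, add_comm α β, sub_right_comm] using h β hβ
    · refine lt_of_le_of_lt ?_ hS
      refine (natDegree_sub_le _ _).trans (max_le ((natDegree_sub_le _ _).trans (max_le ?_ le_rfl))
        (by simp))
      exact natDegree_comp_le.trans (by rw [natDegree_X_add_C, mul_one])
  have hB' : derivative B = C (α ^ q ^ k) := by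
    rw [map_sub, map_sub, derivative_comp, hP, derivative_X_add_C, one_mul, X_pow_comp,
      add_pow_card_pow, derivative_C, sub_zero, C_pow, add_sub_cancel_left]
  have : α ^ q ^ k = 0 := by rw [← C_inj, ← hB', hB, map_zero, C_0]
  exact pow_eq_zero_iff (pow_ne_zero _ Fintype.card_ne_zero) |>.mp this

theorem eq_zero_of_forall_polar_eq_zero {E : Type*} [Field E] [Algebra K E] {m : ℕ} (hm : 2 ≤ m)
    {f Φ : K[X]} (hf : f ^ q - f = X ^ q ^ m * Φ) (hΦ : derivative Φ = -1) (t : E) {S : Finset E}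
    (hSt : q ^ m + q ^ (m - 1) < S.card) (hSf : f.natDegree < S.card) {α : E}
    (h : ∀ β ∈ S, QuadraticMap.polar (fun x => t * x ^ (q ^ m + q ^ (m - 1)) + aeval x f) α β = 0) :
    α = 0 := by
  set P : E[X] := C t * X ^ (q ^ m + q ^ (m - 1)) + f.map (algebraMap K E)
  have hP : (P.eval ·) = fun x => t * x ^ (q ^ m + q ^ (m - 1)) + aeval x f := by
    funext x
    simp [P, eval_map_algebraMap]
  refine eq_zero_of_forall_polar_eval_eq_zero K (P := P) (k := m) ?_ ?_ (hP ▸ h)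
  · have hcast : ((q ^ m + q ^ (m - 1) : ℕ) : E) = 0 := by
      rw [Nat.cast_add, Nat.cast_pow, Nat.cast_pow, natCast_card_eq_zero, zero_pow (by omega),
        zero_pow (by omega), add_zero]
    rw [map_add, derivative_C_mul, derivative_X_pow, hcast, C_0, zero_mul, mul_zero, zero_add,
      derivative_map, derivative_eq_X_pow_of_pow_card_sub_eq (by omega) hf hΦ]
    simp
  · refine (natDegree_add_le _ _).trans_lt (max_lt ?_ ((natDegree_map_le).trans_lt hSf))
    exact (natDegree_C_mul_X_pow_le _ _).trans_lt hSt

/-- The polynomial `L` of the theorem, for `t` in any `K`-algebra. -/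
noncomputable def twistedQPoly {R : Type*} [CommRing R] [Algebra K R] (Φ : K[X]) (m : ℕ) (t : R) :
    R[X] :=
  Φ.map (algebraMap K R) + C (t ^ q) * X ^ (q ^ (m + 1)) - C t * X ^ (q ^ (m - 1))

theorem aeval_twistedQPoly {R A : Type*} [CommRing R] [Algebra K R] [CommRing A] [Algebra R A]
    [Algebra K A] [IsScalarTower K R A] (Φ : K[X]) (m : ℕ) (t : R) (x : A) :
    aeval x (twistedQPoly Φ m t) =
      aeval x Φ + algebraMap R A t ^ q * x ^ q ^ (m + 1) - algebraMap R A t * x ^ q ^ (m - 1) := by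
  simp only [twistedQPoly, map_add, map_sub, map_mul, map_pow, aeval_map_algebraMap, aeval_C,
    aeval_X]

theorem separable_twistedQPoly {R : Type*} [CommRing R] [Algebra K R] {c : ℕ → K}
    (hc : c 0 = -1) (n : ℕ) {m : ℕ} (hm : 2 ≤ m) (t : R) :
    (twistedQPoly (qPoly c n) m t).Separable := by
  have hder : derivative (twistedQPoly (qPoly c n) m t) = -1 := by
    rw [twistedQPoly, map_sub, map_add, derivative_map, derivative_qPoly, derivative_C_mul,
      derivative_C_mul, derivative_X_pow_card_pow R (by omega),
      derivative_X_pow_card_pow R (by omega), hc]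
    simp
  rw [separable_def, hder]
  exact isCoprime_one_right.neg_right

theorem card_pow_le_natDegree_twistedQPoly {R : Type*} [CommRing R] [Nontrivial R] [Algebra K R]
    {c : ℕ → K} {m : ℕ} (hc : c (2 * m) = 1) (hm : 2 ≤ m) (t : R) :
    q ^ (2 * m) ≤ (twistedQPoly (qPoly c (2 * m)) m t).natDegree := by
  refine le_natDegree_of_ne_zero ?_
  have hinj {a b : ℕ} (h : a ≠ b) : q ^ a ≠ q ^ b :=
    (Nat.pow_right_injective Fintype.one_lt_card).ne h
  rw [twistedQPoly, coeff_sub, coeff_add, coeff_map, coeff_qPoly_card_pow c le_rfl, hc,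
    coeff_C_mul_X_pow, coeff_C_mul_X_pow, if_neg (hinj (by omega)),
    if_neg (hinj (by omega))]
  simp

theorem card_pow_le_card_rootSet_twistedQPoly {F E : Type*} [Field F] [Algebra K F] [Field E]
    [Algebra F E] {c : ℕ → K} (hc0 : c 0 = -1) {m : ℕ} (hc : c (2 * m) = 1) (hm : 2 ≤ m) (t : F)
    (hsplit : ((twistedQPoly (qPoly c (2 * m)) m t).map (algebraMap F E)).Splits) :
    q ^ (2 * m) ≤ Fintype.card ((twistedQPoly (qPoly c (2 * m)) m t).rootSet E) := by
  rw [card_rootSet_eq_natDegree (separable_twistedQPoly hc0 _ hm t) hsplit]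
  exact card_pow_le_natDegree_twistedQPoly hc hm t

theorem mem_range_algebraMap_of_aeval_twistedQPoly_eq_zero {F E : Type*} [CommRing F]
    [Algebra K F] [Field E] [Algebra F E] [Algebra K E] [IsScalarTower K F E] {m : ℕ} (hm : m ≠ 0)
    {f Φ : K[X]} (hf : f ^ q - f = X ^ q ^ m * Φ) {t : F} {x : E}
    (hx : aeval x (twistedQPoly Φ m t) = 0) :
    algebraMap F E t * x ^ (q ^ m + q ^ (m - 1)) + aeval x f ∈ Set.range (algebraMap K E) :=
  mem_range_algebraMap_of_pow_card_eq_self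
    (pow_card_eq_self_of_aeval_eq_zero hm hf (by rwa [aeval_twistedQPoly] at hx))

theorem eq_zero_of_forall_mem_rootSet_polar_eq_zero {F E : Type*} [Field F] [Algebra K F] [Field E]
    [Algebra F E] [Algebra K E] {c : ℕ → K} (hc0 : c 0 = -1) {m : ℕ} (hc : c (2 * m) = 1)
    (hm : 2 ≤ m) {f : K[X]} (hf : f ^ q - f = X ^ q ^ m * qPoly c (2 * m))
    (hfdeg : f.natDegree = q ^ (m - 1) * (q ^ m + 1)) {t : F}
    (hsplit : ((twistedQPoly (qPoly c (2 * m)) m t).map (algebraMap F E)).Splits) {α : E}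
    (h : ∀ β ∈ (twistedQPoly (qPoly c (2 * m)) m t).rootSet E, QuadraticMap.polar
      (fun x => algebraMap F E t * x ^ (q ^ m + q ^ (m - 1)) + aeval x f) α β = 0) :
    α = 0 := by
  classical
  have hS := card_pow_le_card_rootSet_twistedQPoly hc0 hc hm t hsplit
  rw [← Set.toFinset_card] at hS
  obtain ⟨hlt, hlt'⟩ :=
    Nat.pow_add_pow_pred_lt_pow_two_mul (Fintype.one_lt_card (α := K)) (by omega : 1 ≤ m)
  exact eq_zero_of_forall_polar_eq_zero hm hf (by rw [derivative_qPoly, hc0, C_neg, C_1]) _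
    (by omega) (by omega) fun β hβ => h β (Set.mem_toFinset.mp hβ)

end FiniteFieldAlgebra

theorem stmt_18_general (Fq : Type*) [Field Fq] [Fintype Fq] (q : ℕ) (hq : Fintype.card Fq = q)
    (m : ℕ) (hm : 2 ≤ m) (c : ℕ → Fq)
    (hc2m : c (2 * m) = 1) (hcap : ∀ i ≤ m, c i = - c (2 * m - i)) (hcm : c m = 0)
    (Φ : Polynomial Fq)
    (hΦ : Φ = ∑ i ∈ Finset.range (2 * m + 1), C (c i) * X ^ (q ^ i))
    (f : Polynomial Fq)
    (hfdeg : f.natDegree = q ^ (m - 1) * (q ^ m + 1)) (hf0 : f.eval 0 = 0)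
    (hf : f ^ q - f = X ^ (q ^ m) * Φ)
    (L : Polynomial (RatFunc Fq))
    (hL : L = Φ.map (algebraMap Fq (RatFunc Fq))
      + Polynomial.C (RatFunc.X ^ q) * X ^ (q ^ (m + 1))
      - Polynomial.C RatFunc.X * X ^ (q ^ (m - 1)))
    (E : Type*) [Field E] [Algebra (RatFunc Fq) E]
    [Algebra Fq E] [IsScalarTower Fq (RatFunc Fq) E]
    (hE : Polynomial.IsSplittingField (RatFunc Fq) E L)
    (V : Submodule Fq E) (hV : (V : Set E) = L.rootSet E)
    (Q : E → E)
    (hQ : ∀ α : E, Q α = algebraMap (RatFunc Fq) E RatFunc.X * α ^ (q ^ m + q ^ (m - 1))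
      + Polynomial.aeval α f)
    (Cf : E → E → E)
    (hCf : ∀ α β : E, Cf α β = Q (α + β) - Q α - Q β) :
    (∀ α ∈ V, Q α ∈ Set.range (algebraMap Fq E)) ∧
    (∀ (a : Fq), ∀ α ∈ V, Q (a • α) = (a ^ 2 : Fq) • Q α) ∧
    (∀ α ∈ V, ∀ β ∈ V, ∀ γ ∈ V, Cf (α + β) γ = Cf α γ + Cf β γ) ∧
    (∀ (a : Fq), ∀ α ∈ V, ∀ β ∈ V, Cf (a • α) β = a • Cf α β) ∧
    (∀ α ∈ V, ∀ β ∈ V, Cf α β = Cf β α) ∧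
    (∀ α ∈ V, ∀ β ∈ V, Cf α β ∈ Set.range (algebraMap Fq E)) ∧
    (Even q → ∀ α ∈ V, Cf α α = 0) ∧
    (∀ α ∈ V, (∀ β ∈ V, Cf α β = 0) → α = 0) ∧
    (∀ σ : E ≃ₐ[RatFunc Fq] E, ∀ α ∈ V, Q (σ α) = Q α) := by
  subst hq
  replace hΦ : Φ = qPoly c (2 * m) := hΦ
  subst hΦ
  replace hL : L = twistedQPoly (qPoly c (2 * m)) m (RatFunc.X : RatFunc Fq) := hL
  have hc0 : c 0 = -1 := by simpa [hc2m] using hcap 0 (Nat.zero_le m)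
  have hfq : f = qQuadratic c m := eq_of_pow_card_sub_eq
    (hf.trans (qQuadratic_pow_card_sub hcap hcm).symm) (hf0.trans (eval_zero_qQuadratic c m).symm)
  have hmemV (α : E) : α ∈ V ↔ α ∈ L.rootSet E := by
    rw [← SetLike.mem_coe, hV]
  have hQV (α : E) (hα : α ∈ V) : Q α ∈ Set.range (algebraMap Fq E) := by
    rw [hQ]
    exact mem_range_algebraMap_of_aeval_twistedQPoly_eq_zero (by omega) hf
      (hL ▸ (mem_rootSet.mp ((hmemV α).mp hα)).2)
  obtain ⟨Qm, rfl⟩ : ∃ Qm : QuadraticMap Fq E E, ⇑Qm = Q :=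
    ⟨qQuadraticMap E _ c m, funext fun x => by rw [hQ, qQuadraticMap_apply, hfq]⟩
  obtain rfl : Cf = QuadraticMap.polar Qm := funext₂ hCf
  refine ⟨hQV, fun a α _ => by rw [Qm.map_smul, sq], fun α _ β _ γ _ => Qm.polar_add_left α β γ,
    fun a α _ β _ => Qm.polar_smul_left a α β, fun α _ β _ => QuadraticMap.polar_comm _ α β,
    fun α hα β hβ => ?_, fun hev α _ => ?_, fun α _ hα => ?_, fun σ α hα => ?_⟩
  · simp only [← Algebra.mem_bot] at hQV ⊢
    exact sub_mem (sub_mem (hQV _ (V.add_mem hα hβ)) (hQV α hα)) (hQV β hβ)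
  · rw [QuadraticMap.polar_self, nsmul_eq_mul, Nat.cast_ofNat, two_eq_zero_of_even_card E hev,
      zero_mul]
  · refine eq_zero_of_forall_mem_rootSet_polar_eq_zero hc0 hc2m hm hf hfdeg (hL ▸ hE.splits)
      fun β hβ => ?_
    rw [← funext hQ]
    exact hα β ((hmemV β).mpr (hL ▸ hβ))
  · obtain ⟨a, ha⟩ := hQV α hα
    calc Qm (σ α) = σ (Qm α) := by
          rw [hQ, hQ, map_add, map_mul, map_pow, σ.commutes]
          exact congrArg _ (aeval_algHom_apply ((σ : E →ₐ[RatFunc Fq] E).restrictScalars Fq) α f)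
      _ = Qm α := by rw [← ha, IsScalarTower.algebraMap_apply Fq (RatFunc Fq) E, σ.commutes]

/-- Let `Φ` be a monic `q`-anti-palindromic `q`-polynomial of
`q`-degree `2m` (`m ≥ 2`) over `F_q`, let `f` be the unique monic polynomial of degree
`q^{m-1}(q^m+1)` with `f(0) = 0` and `f^q - f = X^{q^m}·Φ`, and let
`L = Φ + t^q·X^{q^{m+1}} - t·X^{q^{m-1}}` over `F_q(t)`.  Let `E` be a splitting field of
`L`, `V` the space of roots of `L`, `G = Gal(E/F_q(t))`, and define
`Q(α) = t·α^{q^m+q^{m-1}} + f(α)` and `C(α,β) = Q(α+β) - Q(α) - Q(β)`.  Then on `V`: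
(i) `Q` takes values in `F_q`; (ii) `Q(λα) = λ²Q(α)` and `C` is a symmetric `F_q`-bilinear
form with values in `F_q`, alternating when `q` is even; (iii) `C` is nondegenerate on
`V`; (iv) `Q` is `G`-invariant.  So `Q` is a nondegenerate `G`-invariant `F_q`-valued
quadratic form on `V`. -/
theorem stmt_18 (Fq : Type*) [Field Fq] [Fintype Fq] (q : ℕ) (hq : Fintype.card Fq = q)
    (m : ℕ) (hm : 2 ≤ m) (c : ℕ → Fq)
    (hc2m : c (2 * m) = 1) (hcap : ∀ i ≤ m, c i = - c (2 * m - i)) (hcm : c m = 0)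
    (Φ : Polynomial Fq)
    (hΦ : Φ = ∑ i ∈ Finset.range (2 * m + 1), C (c i) * X ^ (q ^ i))
    (f : Polynomial Fq) (hfmonic : f.Monic)
    (hfdeg : f.natDegree = q ^ (m - 1) * (q ^ m + 1)) (hf0 : f.eval 0 = 0)
    (hf : f ^ q - f = X ^ (q ^ m) * Φ)
    (L : Polynomial (RatFunc Fq))
    (hL : L = Φ.map (algebraMap Fq (RatFunc Fq))
      + Polynomial.C (RatFunc.X ^ q) * X ^ (q ^ (m + 1))
      - Polynomial.C RatFunc.X * X ^ (q ^ (m - 1)))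
    (E : Type*) [Field E] [Algebra (RatFunc Fq) E]
    [Algebra Fq E] [IsScalarTower Fq (RatFunc Fq) E]
    (hE : Polynomial.IsSplittingField (RatFunc Fq) E L)
    (V : Submodule Fq E) (hV : (V : Set E) = L.rootSet E)
    (Q : E → E)
    (hQ : ∀ α : E, Q α = algebraMap (RatFunc Fq) E RatFunc.X * α ^ (q ^ m + q ^ (m - 1))
      + Polynomial.aeval α f)
    (Cf : E → E → E)
    (hCf : ∀ α β : E, Cf α β = Q (α + β) - Q α - Q β) :
    (∀ α ∈ V, Q α ∈ Set.range (algebraMap Fq E)) ∧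
    (∀ (a : Fq), ∀ α ∈ V, Q (a • α) = (a ^ 2 : Fq) • Q α) ∧
    (∀ α ∈ V, ∀ β ∈ V, ∀ γ ∈ V, Cf (α + β) γ = Cf α γ + Cf β γ) ∧
    (∀ (a : Fq), ∀ α ∈ V, ∀ β ∈ V, Cf (a • α) β = a • Cf α β) ∧
    (∀ α ∈ V, ∀ β ∈ V, Cf α β = Cf β α) ∧
    (∀ α ∈ V, ∀ β ∈ V, Cf α β ∈ Set.range (algebraMap Fq E)) ∧
    (Even q → ∀ α ∈ V, Cf α α = 0) ∧
    (∀ α ∈ V, (∀ β ∈ V, Cf α β = 0) → α = 0) ∧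
    (∀ σ : E ≃ₐ[RatFunc Fq] E, ∀ α ∈ V, Q (σ α) = Q α) :=
  stmt_18_general Fq q hq m hm c hc2m hcap hcm Φ hΦ f hfdeg hf0 hf L hL E hE V hV Q hQ Cf hCf
end
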